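/- arXiv:1806.07828 — 12 statements merged into one kernel-verified Lean document; each statement's English description precedes it below -/
import Mathlib

section
/- Let u = x_{i_1}···x_{i_d} be a t-spread monomial. A t-spread monomial x_{j_1}···x_{j_d} (with j_1 < j_2 < ··· < j_d, j_k - j_{k-1} ≥ t) is a minimal generator of B_t(u) if and only if j_k ≤ i_k for all 1 ≤ k ≤ d. -/
/-!
Each Borel move lowers a single entry in one of the positions `1, …, d`, so everything
reachable from `i` is `t`-spread, lies below `i`, and agrees with `i` outside `[1, d]`.
Conversely, such a `b` is reached from `i` by lowering the entries one at a time from left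
to right: the intermediate sequence `(b_1, …, b_{m-1}, i_m, …, i_d)` stays `t`-spread, since
at the junction `b_{m-1} + t ≤ i_{m-1} + t ≤ i_m`.
-/

/-- `a` (with entries `a 1, …, a d`) is a `t`-spread sequence of variable
indices: all entries are positive and consecutive gaps are at least `t`. -/
def IsTSpread (t d : ℕ) (a : ℕ → ℕ) : Prop :=
  (∀ l, 1 ≤ l → l ≤ d → 1 ≤ a l) ∧ ∀ l, 2 ≤ l → l ≤ d → a (l - 1) + t ≤ a l

/-- One Borel move: decrease a single entry (in position `k ∈ [1, d]`) of the
`t`-spread sequence `a`, the result `b` being again `t`-spread. -/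
def BorelStep (t d : ℕ) (a b : ℕ → ℕ) : Prop :=
  IsTSpread t d b ∧ ∃ k, 1 ≤ k ∧ k ≤ d ∧ b k < a k ∧ ∀ l, l ≠ k → b l = a l

open Relation

namespace BorelStep

variable {t d : ℕ} {a b : ℕ → ℕ}

theorem le (h : BorelStep t d a b) : b ≤ a := by
  obtain ⟨-, k, -, -, hlt, hrest⟩ := h
  intro l
  rcases eq_or_ne l k with rfl | hne
  · exact hlt.le
  · exact (hrest l hne).le

theorem eq_of_outside (h : BorelStep t d a b) (l : ℕ) (hl : l = 0 ∨ d < l) : b l = a l := by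
  obtain ⟨-, k, hk1, hkd, -, hrest⟩ := h
  exact hrest l (by omega)

theorem reflTransGen_le (h : ReflTransGen (BorelStep t d) a b) : b ≤ a := by
  induction h with
  | refl => exact le_rfl
  | tail _ hstep ih => exact hstep.le.trans ih

theorem reflTransGen_eq_of_outside (h : ReflTransGen (BorelStep t d) a b) (l : ℕ)
    (hl : l = 0 ∨ d < l) : b l = a l := by
  induction h with
  | refl => rfl
  | tail _ hstep ih => exact (hstep.eq_of_outside l hl).trans ih

theorem isTSpread_of_reflTransGen (ha : IsTSpread t d a)
    (h : ReflTransGen (BorelStep t d) a b) : IsTSpread t d b := by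
  rcases h.cases_tail with rfl | ⟨_, -, hstep⟩
  · exact ha
  · exact hstep.1

end BorelStep

def splice (m : ℕ) (b a : ℕ → ℕ) : ℕ → ℕ := fun l => if l < m then b l else a l

section Splice

variable {t d : ℕ} {a b : ℕ → ℕ}

theorem isTSpread_splice (ha : IsTSpread t d a) (hb : IsTSpread t d b)
    (hba : ∀ k, 1 ≤ k → k ≤ d → b k ≤ a k) (m : ℕ) : IsTSpread t d (splice m b a) := by
  refine ⟨fun l hl1 hld => ?_, fun l hl2 hld => ?_⟩
  · unfold splice
    split_ifs
    exacts [hb.1 l hl1 hld, ha.1 l hl1 hld]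
  · have hba' := hba (l - 1) (by omega) (by omega)
    have ha' := ha.2 l hl2 hld
    have hb' := hb.2 l hl2 hld
    unfold splice
    split_ifs <;> omega

theorem splice_succ_eq_or_borelStep (ha : IsTSpread t d a) (hb : IsTSpread t d b)
    (hba : ∀ k, 1 ≤ k → k ≤ d → b k ≤ a k) (hout : ∀ l, l = 0 ∨ d < l → b l = a l) (m : ℕ) :
    splice (m + 1) b a = splice m b a ∨
      BorelStep t d (splice m b a) (splice (m + 1) b a) := by
  have hdiff : ∀ l, l ≠ m → splice (m + 1) b a l = splice m b a l := by
    intro l hl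
    simp only [splice]
    split_ifs <;> omega
  by_cases hlt : 1 ≤ m ∧ m ≤ d ∧ b m < a m
  · obtain ⟨hm1, hmd, hlt⟩ := hlt
    refine .inr ⟨isTSpread_splice ha hb hba (m + 1), m, hm1, hmd, ?_, hdiff⟩
    simpa [splice] using hlt
  · have hbm : b m = a m := by
      by_cases hm : 1 ≤ m ∧ m ≤ d
      · exact le_antisymm (hba m hm.1 hm.2) (by omega)
      · exact hout m (by omega)
    refine .inl (funext fun l => ?_)
    rcases eq_or_ne l m with rfl | hne
    · simp [splice, hbm]
    · exact hdiff l hne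

theorem reflTransGen_borelStep_splice (ha : IsTSpread t d a) (hb : IsTSpread t d b)
    (hba : ∀ k, 1 ≤ k → k ≤ d → b k ≤ a k) (hout : ∀ l, l = 0 ∨ d < l → b l = a l) (m : ℕ) :
    ReflTransGen (BorelStep t d) a (splice m b a) := by
  induction m with
  | zero =>
    rw [show splice 0 b a = a from funext fun l => by simp [splice]]
  | succ m ih =>
    rcases splice_succ_eq_or_borelStep ha hb hba hout m with heq | hstep
    · exact heq ▸ ih
    · exact ih.tail hstep

theorem splice_eq_of_eq_outside (hout : ∀ l, l = 0 ∨ d < l → b l = a l) :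
    splice (d + 1) b a = b := by
  funext l
  simp only [splice]
  split_ifs with hl
  · rfl
  · exact (hout l (by omega)).symm

end Splice

theorem mem_tSpread_principal_Borel_iff_general
    (t d : ℕ) (i : ℕ → ℕ) (hi : IsTSpread t d i) (b : ℕ → ℕ) :
    Relation.ReflTransGen (BorelStep t d) i b ↔
      (IsTSpread t d b ∧ (∀ k, 1 ≤ k → k ≤ d → b k ≤ i k) ∧
        ∀ l, l = 0 ∨ d < l → b l = i l) := by
  constructor
  · intro h
    exact ⟨BorelStep.isTSpread_of_reflTransGen hi h, fun k _ _ => BorelStep.reflTransGen_le h k,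
      BorelStep.reflTransGen_eq_of_outside h⟩
  · rintro ⟨hb, hbi, hout⟩
    simpa only [splice_eq_of_eq_outside hout] using
      reflTransGen_borelStep_splice hi hb hbi hout (d + 1)

theorem mem_tSpread_principal_Borel_iff
    (t d : ℕ) (ht : 1 ≤ t) (i : ℕ → ℕ) (hi : IsTSpread t d i) (b : ℕ → ℕ) :
    Relation.ReflTransGen (BorelStep t d) i b ↔
      (IsTSpread t d b ∧ (∀ k, 1 ≤ k → k ≤ d → b k ≤ i k) ∧
        ∀ l, l = 0 ∨ d < l → b l = i l) :=
  mem_tSpread_principal_Borel_iff_general t d i hi b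
end

section
/- The sorting operator preserves the set of minimal generators of a t-spread principal Borel ideal: if v, w are minimal generators of B_t(u) and (v', w') = sort(v, w), then v' and w' are minimal generators of B_t(u). -/
/-- `a` encodes a minimal generator of `B_t(u)` where `u` is encoded by `i`. -/
def IsGen (t d : ℕ) (i a : ℕ → ℕ) : Prop :=
  IsTSpread t d a ∧ ∀ l, 1 ≤ l → l ≤ d → a l ≤ i l

/-!
Every property of the merge `c` is obtained by counting how many entries of `a` and `b` fall
into a set of values. At least `l` entries of each of `a` and `b` are `≤ i l`, so at least `2l`
entries of `c` are, whence `c (2l) ≤ i l`. A window `[x, x + t)` contains at most one entry of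
each `t`-spread sequence, hence at most two entries of `c`, whence `c m + t ≤ c (m + 2)`.
-/

open Finset

theorem monotoneOn_Icc_of_le_pred {β : Type*} [Preorder β] {f : ℕ → β} {N : ℕ}
    (hf : ∀ l, 2 ≤ l → l ≤ N → f (l - 1) ≤ f l) : MonotoneOn f (Set.Icc 1 N) :=
  monotoneOn_of_le_add_one Set.ordConnected_Icc fun l _ hl hl' => by
    simpa using hf (l + 1) (by simp only [Set.mem_Icc] at hl; omega) hl'.2

theorem card_filter_eq_add_of_map_eq_add {α β γ δ : Type*} {s : Finset α} {s₁ : Finset β}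
    {s₂ : Finset γ} {c : α → δ} {a : β → δ} {b : γ → δ}
    (h : s.val.map c = s₁.val.map a + s₂.val.map b) (p : δ → Prop) [DecidablePred p] :
    #{n ∈ s | p (c n)} = #{n ∈ s₁ | p (a n)} + #{n ∈ s₂ | p (b n)} := by
  have := congrArg (Multiset.countP p) h
  simpa only [Multiset.countP_add, Multiset.countP_map, ← filter_val, card_val] using this

theorem exists_apply_eq_of_map_eq_add {α β γ δ : Type*} {s : Finset α} {s₁ : Finset β}
    {s₂ : Finset γ} {c : α → δ} {a : β → δ} {b : γ → δ}
    (h : s.val.map c = s₁.val.map a + s₂.val.map b) {n : α} (hn : n ∈ s) :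
    (∃ m ∈ s₁, a m = c n) ∨ ∃ m ∈ s₂, b m = c n := by
  have hc : c n ∈ s.val.map c := Multiset.mem_map_of_mem c hn
  simpa only [h, Multiset.mem_add, Multiset.mem_map, mem_val] using hc

variable {t d : ℕ} {i a b c : ℕ → ℕ}

namespace IsTSpread

theorem monotoneOn (ha : IsTSpread t d a) : MonotoneOn a (Set.Icc 1 d) :=
  monotoneOn_Icc_of_le_pred fun l h2 hl => (ha.2 l h2 hl).trans' (Nat.le_add_right _ _)

theorem add_le_of_lt (ha : IsTSpread t d a) {m n : ℕ} (hm : 1 ≤ m) (hmn : m < n)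
    (hn : n ≤ d) : a m + t ≤ a n :=
  calc a m + t ≤ a (m + 1) := by simpa using ha.2 (m + 1) (by omega) (by omega)
    _ ≤ a n := ha.monotoneOn ⟨by omega, by omega⟩ ⟨by omega, hn⟩ hmn

theorem card_filter_mem_Ico_le_one (ha : IsTSpread t d a) (x : ℕ) :
    #{n ∈ Icc 1 d | a n ∈ Set.Ico x (x + t)} ≤ 1 := by
  refine card_le_one.mpr fun m hm n hn => ?_
  simp only [mem_filter, mem_Icc, Set.mem_Ico] at hm hn
  rcases lt_trichotomy m n with hmn | hmn | hmn
  · have := ha.add_le_of_lt hm.1.1 hmn hn.1.2; omega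
  · exact hmn
  · have := ha.add_le_of_lt hn.1.1 hmn hm.1.2; omega

end IsTSpread

theorem IsGen.le_card_filter_le (ha : IsGen t d i a) {l : ℕ} (hl : 1 ≤ l) (hld : l ≤ d) :
    l ≤ #{n ∈ Icc 1 d | a n ≤ i l} := by
  have hsub : Icc 1 l ⊆ {n ∈ Icc 1 d | a n ≤ i l} := fun n hn => by
    simp only [mem_Icc] at hn
    simp only [mem_filter, mem_Icc]
    exact ⟨⟨hn.1, by omega⟩,
      (ha.1.monotoneOn ⟨hn.1, by omega⟩ ⟨hl, hld⟩ hn.2).trans (ha.2 l hl hld)⟩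
  simpa using card_le_card hsub

theorem one_le_of_map_eq
    (hperm : (Icc 1 (2 * d)).val.map c = (Icc 1 d).val.map a + (Icc 1 d).val.map b)
    (ha : IsTSpread t d a) (hb : IsTSpread t d b) {n : ℕ} (hn : 1 ≤ n) (hnd : n ≤ 2 * d) :
    1 ≤ c n := by
  rcases exists_apply_eq_of_map_eq_add hperm (mem_Icc.mpr ⟨hn, hnd⟩) with
    ⟨m, hm, hmc⟩ | ⟨m, hm, hmc⟩
  · exact hmc ▸ ha.1 m (mem_Icc.mp hm).1 (mem_Icc.mp hm).2
  · exact hmc ▸ hb.1 m (mem_Icc.mp hm).1 (mem_Icc.mp hm).2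

theorem le_of_monotoneOn_of_map_eq (hc : MonotoneOn c (Set.Icc 1 (2 * d)))
    (hperm : (Icc 1 (2 * d)).val.map c = (Icc 1 d).val.map a + (Icc 1 d).val.map b)
    (ha : IsGen t d i a) (hb : IsGen t d i b)
    {l : ℕ} (hl : 1 ≤ l) (hld : l ≤ d) : c (2 * l) ≤ i l := by
  by_contra! hlt
  have hsub : {n ∈ Icc 1 (2 * d) | c n ≤ i l} ⊆ Icc 1 (2 * l - 1) := fun n hn => by
    simp only [mem_filter, mem_Icc] at hn
    refine mem_Icc.mpr ⟨hn.1.1, not_lt.mp fun h2l => ?_⟩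
    have := hc ⟨by omega, by omega⟩ ⟨hn.1.1, hn.1.2⟩ (show 2 * l ≤ n by omega)
    omega
  have hcard := card_le_card hsub
  rw [card_filter_eq_add_of_map_eq_add hperm (· ≤ i l), Nat.card_Icc] at hcard
  have := ha.le_card_filter_le hl hld
  have := hb.le_card_filter_le hl hld
  omega

theorem add_le_of_monotoneOn_of_map_eq (hc : MonotoneOn c (Set.Icc 1 (2 * d)))
    (hperm : (Icc 1 (2 * d)).val.map c = (Icc 1 d).val.map a + (Icc 1 d).val.map b)
    (ha : IsTSpread t d a) (hb : IsTSpread t d b) {m : ℕ} (hm : 1 ≤ m) (hmd : m + 2 ≤ 2 * d) :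
    c m + t ≤ c (m + 2) := by
  by_contra! hlt
  have hsub : Icc m (m + 2) ⊆ {n ∈ Icc 1 (2 * d) | c n ∈ Set.Ico (c m) (c m + t)} := by
    intro n hn
    simp only [mem_Icc] at hn
    have hmn := hc ⟨hm, by omega⟩ ⟨by omega, by omega⟩ hn.1
    have hnm := hc ⟨by omega, by omega⟩ ⟨by omega, hmd⟩ hn.2
    simp only [mem_filter, mem_Icc, Set.mem_Ico]
    omega
  have hcard := card_le_card hsub
  rw [card_filter_eq_add_of_map_eq_add hperm (· ∈ Set.Ico (c m) (c m + t)), Nat.card_Icc]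
    at hcard
  have := ha.card_filter_mem_Ico_le_one (c m)
  have := hb.card_filter_mem_Ico_le_one (c m)
  omega

theorem isGen_of_monotoneOn_of_map_eq (hc : MonotoneOn c (Set.Icc 1 (2 * d)))
    (hperm : (Icc 1 (2 * d)).val.map c = (Icc 1 d).val.map a + (Icc 1 d).val.map b)
    (ha : IsGen t d i a) (hb : IsGen t d i b) {r : ℕ} (hr : r ≤ 1) :
    IsGen t d i (fun l => c (2 * l - r)) := by
  refine ⟨⟨fun l hl hld => one_le_of_map_eq hperm ha.1 hb.1 (by omega) (by omega),
    fun l hl hld => ?_⟩, fun l hl hld => ?_⟩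
  · have hidx : 2 * l - r = 2 * (l - 1) - r + 2 := by omega
    simpa only [hidx] using add_le_of_monotoneOn_of_map_eq hc hperm ha.1 hb.1
      (m := 2 * (l - 1) - r) (by omega) (by omega)
  · exact (hc ⟨by omega, by omega⟩ ⟨by omega, by omega⟩ (Nat.sub_le _ _)).trans
      (le_of_monotoneOn_of_map_eq hc hperm ha hb hl hld)

theorem sorting_preserves_generators_general
    (t d : ℕ) (i : ℕ → ℕ)
    (a b c : ℕ → ℕ)
    (ha : IsGen t d i a) (hb : IsGen t d i b)
    (hmono : ∀ l, 2 ≤ l → l ≤ 2 * d → c (l - 1) ≤ c l)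
    (hperm : (Finset.Icc 1 (2 * d)).val.map c =
      (Finset.Icc 1 d).val.map a + (Finset.Icc 1 d).val.map b) :
    IsGen t d i (fun l => c (2 * l - 1)) ∧ IsGen t d i (fun l => c (2 * l)) := by
  have hc := monotoneOn_Icc_of_le_pred hmono
  exact ⟨isGen_of_monotoneOn_of_map_eq hc hperm ha hb le_rfl,
    by simpa using isGen_of_monotoneOn_of_map_eq hc hperm ha hb zero_le_one⟩

theorem sorting_preserves_generators
    (t d : ℕ) (ht : 1 ≤ t) (i : ℕ → ℕ) (hi : IsTSpread t d i)
    (a b c : ℕ → ℕ)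
    (ha : IsGen t d i a) (hb : IsGen t d i b)
    (hmono : ∀ l, 2 ≤ l → l ≤ 2 * d → c (l - 1) ≤ c l)
    (hperm : (Finset.Icc 1 (2 * d)).val.map c =
      (Finset.Icc 1 d).val.map a + (Finset.Icc 1 d).val.map b) :
    IsGen t d i (fun l => c (2 * l - 1)) ∧ IsGen t d i (fun l => c (2 * l)) :=
  sorting_preserves_generators_general t d i a b c ha hb hmono hperm
end

section
/- Let t ≥ 1 and u = x_{i_1}···x_{i_d} a t-spread monomial with i_d = n. The set F_1 = [j_1, j_1+t-1] ∪ [j_2, j_2+t-1] ∪ ··· ∪ [j_{d-1}, j_{d-1}+t-1], where j_l ≤ i_l for 1 ≤ l ≤ d-1 and j_l - j_{l-1} ≥ t for 2 ≤ l ≤ d-1, is a face of the simplicial complex Δ with Stanley-Reisner ideal B_t(u); i.e., no minimal generator of B_t(u) has its support contained in F_1. -/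
lemma monotoneOn_Icc_of_add_le {t m : ℕ} {j : ℕ → ℕ}
    (hj : ∀ r, 2 ≤ r → r ≤ m → j (r - 1) + t ≤ j r) : MonotoneOn j (Set.Icc 1 m) :=
  monotoneOn_of_le_add_one Set.ordConnected_Icc fun a _ ha ha' => by
    have := hj (a + 1) (by grind) ha'.2
    grind

lemma lt_of_le_of_add_le_of_lt_add {ι β : Type*} [LinearOrder ι] [AddCommMonoid β]
    [PartialOrder β] [IsOrderedAddMonoid β] {s : Set ι} {j : ι → β} (hj : MonotoneOn j s)
    {a b : ι} (ha : a ∈ s) (hb : b ∈ s) {x y t : β}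
    (hx : j a ≤ x) (hxy : x + t ≤ y) (hy : y < j b + t) : a < b := by
  by_contra! hba
  have : j b + t ≤ y := (add_le_add_left ((hj hb ha hba).trans hx) t).trans hxy
  exact this.not_gt hy

theorem F1_is_face_general
    (t d : ℕ) (hd : 2 ≤ d)
    (i j : ℕ → ℕ)
    (hj2 : ∀ r, 2 ≤ r → r ≤ d - 1 → j (r - 1) + t ≤ j r) :
    ¬ ∃ k, IsGen t d i k ∧
      ∀ l, 1 ≤ l → l ≤ d → ∃ r, 1 ≤ r ∧ r ≤ d - 1 ∧ j r ≤ k l ∧ k l < j r + t := by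
  rintro ⟨k, ⟨⟨-, hk⟩, -⟩, hF⟩
  choose! r hr_ge hr_le hr_left hr_right using hF
  have hmaps : Set.MapsTo r (Set.Icc 1 d) (Set.Icc 1 (d - 1)) := fun l ⟨hl₁, hl₂⟩ =>
    ⟨hr_ge l hl₁ hl₂, hr_le l hl₁ hl₂⟩
  have hr_strictMono : StrictMonoOn r (Set.Icc 1 d) :=
    strictMonoOn_of_lt_add_one Set.ordConnected_Icc fun l _ hl hl' =>
      lt_of_le_of_add_le_of_lt_add (monotoneOn_Icc_of_add_le hj2) (hmaps hl) (hmaps hl')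
        (hr_left l hl.1 hl.2) (by simpa using hk (l + 1) (Nat.succ_le_succ hl.1) hl'.2)
        (hr_right (l + 1) hl'.1 hl'.2)
  have := Finset.card_le_card_of_injOn (s := Finset.Icc 1 d) (t := Finset.Icc 1 (d - 1)) r
    (by simpa using hmaps) (by simpa using hr_strictMono.injOn)
  simp only [Nat.card_Icc] at this
  omega

theorem F1_is_face
    (t d n : ℕ) (ht : 1 ≤ t) (hd : 2 ≤ d)
    (i j : ℕ → ℕ) (hi : IsTSpread t d i) (hn : i d = n)
    (hj1 : ∀ r, 1 ≤ r → r ≤ d - 1 → 1 ≤ j r ∧ j r ≤ i r)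
    (hj2 : ∀ r, 2 ≤ r → r ≤ d - 1 → j (r - 1) + t ≤ j r) :
    ¬ ∃ k, IsGen t d i k ∧
      ∀ l, 1 ≤ l → l ≤ d → ∃ r, 1 ≤ r ∧ r ≤ d - 1 ∧ j r ≤ k l ∧ k l < j r + t :=
  F1_is_face_general t d hd i j hj2
end

section
/- Let t ≥ 1 and u = x_{i_1}···x_{i_d} a t-spread monomial with i_d = n. The set F_2 = {i_1+1, i_1+2, ..., n} is a face of the simplicial complex Δ with Stanley-Reisner ideal B_t(u), and moreover (x_1,...,x_{i_1}) is a minimal prime of B_t(u). -/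
namespace IsTSpread

variable {t d : ℕ} {a : ℕ → ℕ}

theorem strictMonoOn (ha : IsTSpread t d a) (ht : 1 ≤ t) : StrictMonoOn a (Set.Icc 1 d) := by
  rintro l ⟨hl, -⟩ m ⟨-, hm⟩ hlm
  induction m, hlm using Nat.le_induction with
  | base =>
    have := ha.2 (l + 1) (by omega) hm
    simp only [Nat.add_sub_cancel] at this
    show a l < a (l + 1)
    omega
  | succ m hlm ih =>
    have := ha.2 (m + 1) (by omega) hm
    simp only [Nat.add_sub_cancel] at this
    have := ih (by omega)
    omega

theorem update_one (ha : IsTSpread t d a) {p : ℕ} (hp : 1 ≤ p) (hpa : p ≤ a 1) :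
    IsTSpread t d (Function.update a 1 p) := by
  constructor
  · intro l hl hld
    rcases eq_or_ne l 1 with rfl | h
    · simpa using hp
    · simpa [h] using ha.1 l hl hld
  · intro l hl hld
    have := ha.2 l hl hld
    rcases eq_or_ne l 2 with rfl | h
    · simp only [Nat.add_one_sub_one, Function.update_self,
        Function.update_of_ne (by omega : (2 : ℕ) ≠ 1)] at this ⊢
      omega
    · simpa [Function.update_of_ne (by omega : l - 1 ≠ 1),
        Function.update_of_ne (by omega : l ≠ 1)] using this

theorem isGen_update_one (ha : IsTSpread t d a) {p : ℕ} (hp : 1 ≤ p) (hpa : p ≤ a 1) :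
    IsGen t d a (Function.update a 1 p) := by
  refine ⟨ha.update_one hp hpa, fun l _ _ => ?_⟩
  rcases eq_or_ne l 1 with rfl | h
  · simpa using hpa
  · simp [h]

end IsTSpread

theorem F2_is_face_and_minimal_prime_general
    (t d : ℕ) (ht : 1 ≤ t) (hd : 1 ≤ d)
    (i : ℕ → ℕ) (hi : IsTSpread t d i) :
    (∀ k, IsGen t d i k → ∃ l, 1 ≤ l ∧ l ≤ d ∧ k l ≤ i 1) ∧
    (∀ p, 1 ≤ p → p ≤ i 1 → ∃ k, IsGen t d i k ∧
      (∃ l, 1 ≤ l ∧ l ≤ d ∧ k l = p) ∧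
      ∀ l, 1 ≤ l → l ≤ d → k l ≤ i 1 → k l = p) := by
  refine ⟨fun k hk => ⟨1, le_rfl, hd, hk.2 1 le_rfl hd⟩, fun p hp hpi => ?_⟩
  refine ⟨Function.update i 1 p, hi.isGen_update_one hp hpi,
    ⟨1, le_rfl, hd, Function.update_self ..⟩, fun l hl hld hle => ?_⟩
  rcases eq_or_ne l 1 with rfl | h
  · exact Function.update_self ..
  · rw [Function.update_of_ne h] at hle
    have := hi.strictMonoOn ht ⟨le_rfl, hd⟩ ⟨hl, hld⟩ (by omega)
    omega

theorem F2_is_face_and_minimal_prime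
    (t d n : ℕ) (ht : 1 ≤ t) (hd : 1 ≤ d)
    (i : ℕ → ℕ) (hi : IsTSpread t d i) (hn : i d = n) :
    (∀ k, IsGen t d i k → ∃ l, 1 ≤ l ∧ l ≤ d ∧ k l ≤ i 1) ∧
    (∀ p, 1 ≤ p → p ≤ i 1 → ∃ k, IsGen t d i k ∧
      (∃ l, 1 ≤ l ∧ l ≤ d ∧ k l = p) ∧
      ∀ l, 1 ≤ l → l ≤ d → k l ≤ i 1 → k l = p) :=
  F2_is_face_and_minimal_prime_general t d ht hd i hi
end

section
/- Let t ≥ 1 and u = x_{i_1}···x_{i_d} a t-spread monomial with i_d = n. For 2 ≤ s ≤ d-1 and j_1,...,j_{s-1} with j_l ≤ i_l and j_l - j_{l-1} ≥ t, the set F_3 = [j_1, j_1+t-1] ∪ ··· ∪ [j_{s-1}, j_{s-1}+t-1] ∪ [i_s+1, n] (assuming i_s + 1 - j_{s-1} ≥ t) is a face of the simplicial complex with Stanley-Reisner ideal B_t(u). -/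
def InWindows (t m : ℕ) (j : ℕ → ℕ) (x : ℕ) : Prop :=
  ∃ r, 1 ≤ r ∧ r ≤ m ∧ j r ≤ x ∧ x < j r + t

section Spread

variable {t m : ℕ} {f : ℕ → ℕ}

lemma monotoneOn_of_spread (hf : ∀ l, 2 ≤ l → l ≤ m → f (l - 1) + t ≤ f l) :
    MonotoneOn f (Set.Icc 1 m) :=
  monotoneOn_of_le_add_one Set.ordConnected_Icc fun l _ hl hl' =>
    le_of_add_le_left (hf (l + 1) (by grind) hl'.2)

lemma not_inWindows_of_add_le (hf : ∀ l, 2 ≤ l → l ≤ m → f (l - 1) + t ≤ f l) {x : ℕ}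
    (hx : f m + t ≤ x) : ¬ InWindows t m f x := by
  rintro ⟨r, hr, hrm, -, hxr⟩
  have hfr := monotoneOn_of_spread hf ⟨hr, hrm⟩ ⟨hr.trans hrm, le_rfl⟩ hrm
  omega

/-- An entry cannot fall back into an earlier window: it lies `t` above its predecessor, which
by induction already dominates `j`. -/
lemma le_of_forall_inWindows {j : ℕ → ℕ}
    (hj : ∀ r, 2 ≤ r → r ≤ m → j (r - 1) + t ≤ j r)
    (hf : ∀ l, 2 ≤ l → l ≤ m → f (l - 1) + t ≤ f l)
    (hw : ∀ l, 1 ≤ l → l ≤ m → InWindows t m j (f l)) :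
    ∀ l, 1 ≤ l → l ≤ m → j l ≤ f l := by
  intro l
  induction l with
  | zero => omega
  | succ l ih =>
    intro _ hlm
    obtain ⟨r, hr, hrm, hjr, hfr⟩ := hw (l + 1) (by omega) hlm
    by_cases hlr : l + 1 ≤ r
    · exact (monotoneOn_of_spread hj ⟨by omega, hlm⟩ ⟨hr, hrm⟩ hlr).trans hjr
    · have hl : 1 ≤ l := by omega
      have hjl := ih hl (by omega)
      have hrl := monotoneOn_of_spread hj ⟨hr, hrm⟩ ⟨hl, by omega⟩ (by omega : r ≤ l)
      have hstep := hf (l + 1) (by omega) hlm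
      simp only [Nat.add_sub_cancel] at hstep
      omega

end Spread

theorem F3_is_face_general
    (t d n s : ℕ) (hs1 : 2 ≤ s) (hs2 : s ≤ d - 1)
    (i j : ℕ → ℕ) (hi : IsTSpread t d i)
    (hj2 : ∀ r, 2 ≤ r → r ≤ s - 1 → j (r - 1) + t ≤ j r) :
    ¬ ∃ k, IsGen t d i k ∧
      ∀ l, 1 ≤ l → l ≤ d →
        (∃ r, 1 ≤ r ∧ r ≤ s - 1 ∧ j r ≤ k l ∧ k l < j r + t) ∨
        (i s + 1 ≤ k l ∧ k l ≤ n) := by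
  rintro ⟨k, ⟨⟨-, hk⟩, hki⟩, hF⟩
  have hk_init : ∀ l, 2 ≤ l → l ≤ s - 1 → k (l - 1) + t ≤ k l :=
    fun l hl hls => hk l hl (by omega)
  have hkj : j (s - 1) ≤ k (s - 1) := by
    refine le_of_forall_inWindows hj2 hk_init (fun l hl hls => (hF l hl (by omega)).resolve_right ?_)
      (s - 1) (by omega) le_rfl
    have hil := monotoneOn_of_spread hi.2 ⟨hl, by omega⟩ ⟨by omega, by omega⟩ (by omega : l ≤ s)
    have hkl := hki l hl (by omega)
    omega
  have hks : k (s - 1) + t ≤ k s := hk s hs1 (by omega)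
  rcases hF s (by omega) (by omega) with hw | ⟨his, -⟩
  · exact not_inWindows_of_add_le hj2 (by omega) hw
  · have hkis := hki s (by omega) (by omega)
    omega

theorem F3_is_face
    (t d n s : ℕ) (ht : 1 ≤ t) (hs1 : 2 ≤ s) (hs2 : s ≤ d - 1)
    (i j : ℕ → ℕ) (hi : IsTSpread t d i) (hn : i d = n)
    (hj1 : ∀ r, 1 ≤ r → r ≤ s - 1 → 1 ≤ j r ∧ j r ≤ i r)
    (hj2 : ∀ r, 2 ≤ r → r ≤ s - 1 → j (r - 1) + t ≤ j r)
    (hjs : j (s - 1) + t ≤ i s + 1) :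
    ¬ ∃ k, IsGen t d i k ∧
      ∀ l, 1 ≤ l → l ≤ d →
        (∃ r, 1 ≤ r ∧ r ≤ s - 1 ∧ j r ≤ k l ∧ k l < j r + t) ∨
        (i s + 1 ≤ k l ∧ k l ≤ n) :=
  F3_is_face_general t d n s hs1 hs2 i j hi hj2
end

section
/- Let t ≥ 1 and u = x_{i_1}···x_{i_d} a t-spread monomial with i_d = n. The face F_1 = [j_1, j_1+t-1] ∪ ··· ∪ [j_{d-1}, j_{d-1}+t-1] (with j_l ≤ i_l and j_l - j_{l-1} ≥ t) is a facet of the simplicial complex Δ with Stanley-Reisner ideal B_t(u): for every j ∈ [n] \ F_1, the set F_1 ∪ {j} contains the support of some minimal generator of B_t(u). -/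
def spliceAt (t r x : ℕ) (a : ℕ → ℕ) (l : ℕ) : ℕ :=
  if l ≤ r then a l else if l = r + 1 then x else a (l - 1) + (t - 1)

section spliceAt

variable {t d r x : ℕ} {a : ℕ → ℕ}

lemma spliceAt_pos (hr : r ≤ d - 1) (ha : ∀ l, 1 ≤ l → l ≤ d - 1 → 1 ≤ a l) (hx : 1 ≤ x) :
    ∀ l, 1 ≤ l → l ≤ d → 1 ≤ spliceAt t r x a l := by
  intro l hl1 hld
  unfold spliceAt
  split_ifs with h h'
  · exact ha l hl1 (by omega)
  · exact hx
  · have := ha (l - 1) (by omega) (by omega)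
    omega

lemma spliceAt_spread (hr : r ≤ d - 1) (ha : ∀ l, 2 ≤ l → l ≤ d - 1 → a (l - 1) + t ≤ a l)
    (hleft : 1 ≤ r → a r + t ≤ x) (hright : r + 1 ≤ d - 1 → x < a (r + 1)) :
    ∀ l, 2 ≤ l → l ≤ d → spliceAt t r x a (l - 1) + t ≤ spliceAt t r x a l := by
  intro l hl2 hld
  rcases lt_trichotomy l (r + 1) with hlt | rfl | hgt
  · simp only [spliceAt, if_pos (show l - 1 ≤ r by omega), if_pos (show l ≤ r by omega)]
    exact ha l hl2 (by omega)
  · simp only [spliceAt, if_pos (show r + 1 - 1 ≤ r by omega), if_neg (show ¬ r + 1 ≤ r by omega)]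
    simpa using hleft (by omega)
  · rcases eq_or_lt_of_le (show r + 2 ≤ l by omega) with rfl | hgt'
    · simp only [spliceAt, if_neg (show ¬ r + 2 ≤ r by omega), if_neg (show ¬ r + 2 = r + 1 by omega),
        show r + 2 - 1 = r + 1 by omega, if_neg (show ¬ r + 1 ≤ r by omega), ↓reduceIte]
      have := hright (by omega)
      omega
    · simp only [spliceAt, if_neg (show ¬ l ≤ r by omega), if_neg (show ¬ l = r + 1 by omega),
        if_neg (show ¬ l - 1 ≤ r by omega), if_neg (show ¬ l - 1 = r + 1 by omega)]
      have := ha (l - 1) (by omega) (by omega)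
      have : l - 1 - 1 = l - 2 := by omega
      omega

lemma spliceAt_le {i : ℕ → ℕ} (hr : r ≤ d - 1) (ha : ∀ l, 1 ≤ l → l ≤ d - 1 → a l ≤ i l)
    (hi : ∀ l, 2 ≤ l → l ≤ d → i (l - 1) + t ≤ i l) (hx : x ≤ i d)
    (hright : r + 1 ≤ d - 1 → x < a (r + 1)) :
    ∀ l, 1 ≤ l → l ≤ d → spliceAt t r x a l ≤ i l := by
  intro l hl1 hld
  unfold spliceAt
  split_ifs with h h'
  · exact ha l hl1 (by omega)
  · subst h'
    by_cases hrd : r + 1 ≤ d - 1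
    · have := ha (r + 1) hl1 hrd
      have := hright hrd
      omega
    · rwa [show r + 1 = d by omega]
  · have := ha (l - 1) (by omega) (by omega)
    have := hi l (by omega) hld
    omega

lemma spliceAt_mem (ht : 1 ≤ t) (hr : r ≤ d - 1) {l : ℕ} (hl1 : 1 ≤ l) (hld : l ≤ d) :
    spliceAt t r x a l = x ∨ ∃ s, 1 ≤ s ∧ s ≤ d - 1 ∧
      a s ≤ spliceAt t r x a l ∧ spliceAt t r x a l < a s + t := by
  unfold spliceAt
  split_ifs with h h'
  · exact Or.inr ⟨l, hl1, by omega, le_rfl, by omega⟩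
  · exact Or.inl rfl
  · exact Or.inr ⟨l - 1, by omega, by omega, by omega, by omega⟩

end spliceAt

lemma exists_split_index {t m x : ℕ} {a : ℕ → ℕ}
    (hx : ∀ r, 1 ≤ r → r ≤ m → ¬ (a r ≤ x ∧ x < a r + t)) :
    ∃ r ≤ m, (1 ≤ r → a r + t ≤ x) ∧ (r + 1 ≤ m → x < a (r + 1)) := by
  classical
  set P : ℕ → Prop := fun r => 1 ≤ r ∧ a r + t ≤ x
  set r := Nat.findGreatest P m with hr
  refine ⟨r, Nat.findGreatest_le m, fun h => ?_, fun h => ?_⟩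
  · exact (Nat.findGreatest_of_ne_zero hr.symm (by omega)).2
  · have hnP : ¬ P (r + 1) := Nat.findGreatest_is_greatest (Nat.lt_succ_self r) h
    have := hx (r + 1) (by omega) h
    simp only [P, not_and, not_le] at hnP
    omega

theorem F1_is_facet_general
    (t d n : ℕ) (ht : 1 ≤ t)
    (i j : ℕ → ℕ) (hi : IsTSpread t d i) (hn : i d = n)
    (hj1 : ∀ r, 1 ≤ r → r ≤ d - 1 → 1 ≤ j r ∧ j r ≤ i r)
    (hj2 : ∀ r, 2 ≤ r → r ≤ d - 1 → j (r - 1) + t ≤ j r)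
    (x : ℕ) (hx1 : 1 ≤ x) (hx2 : x ≤ n)
    (hxF : ∀ r, 1 ≤ r → r ≤ d - 1 → ¬ (j r ≤ x ∧ x < j r + t)) :
    ∃ k, IsGen t d i k ∧
      ∀ l, 1 ≤ l → l ≤ d →
        k l = x ∨ ∃ r, 1 ≤ r ∧ r ≤ d - 1 ∧ j r ≤ k l ∧ k l < j r + t := by
  obtain ⟨r, hr, hleft, hright⟩ := exists_split_index hxF
  refine ⟨spliceAt t r x j, ⟨⟨?_, ?_⟩, ?_⟩, fun l hl1 hld => spliceAt_mem ht hr hl1 hld⟩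
  · exact spliceAt_pos hr (fun l h1 h2 => (hj1 l h1 h2).1) hx1
  · exact spliceAt_spread hr hj2 hleft hright
  · exact spliceAt_le hr (fun l h1 h2 => (hj1 l h1 h2).2) hi.2 (hn ▸ hx2) hright

theorem F1_is_facet
    (t d n : ℕ) (ht : 1 ≤ t) (hd : 2 ≤ d)
    (i j : ℕ → ℕ) (hi : IsTSpread t d i) (hn : i d = n)
    (hj1 : ∀ r, 1 ≤ r → r ≤ d - 1 → 1 ≤ j r ∧ j r ≤ i r)
    (hj2 : ∀ r, 2 ≤ r → r ≤ d - 1 → j (r - 1) + t ≤ j r)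
    (x : ℕ) (hx1 : 1 ≤ x) (hx2 : x ≤ n)
    (hxF : ∀ r, 1 ≤ r → r ≤ d - 1 → ¬ (j r ≤ x ∧ x < j r + t)) :
    ∃ k, IsGen t d i k ∧
      ∀ l, 1 ≤ l → l ≤ d →
        k l = x ∨ ∃ r, 1 ≤ r ∧ r ≤ d - 1 ∧ j r ≤ k l ∧ k l < j r + t :=
  F1_is_facet_general t d n ht i j hi hn hj1 hj2 x hx1 hx2 hxF
end

section
/- Let t ≥ 1 and u = x_{i_1}···x_{i_d} a t-spread monomial with i_d = n and such that every index in [n] appears in some minimal generator of B_t(u). Then every face of the simplicial complex Δ with Stanley-Reisner ideal B_t(u) is contained in a set of one of the forms: (i) a union of d-1 intervals [j_r, j_r+t-1] with j_r ≤ i_r and j_r - j_{r-1} ≥ t; (ii) {i_1+1, ..., n}; (iii) a union of s-1 intervals [j_r, j_r+t-1] (j_r ≤ i_r, j_r - j_{r-1} ≥ t) together with [i_s+1, n] for some 2 ≤ s ≤ d-1. -/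
theorem IsTSpread.add_le_succ {t d l : ℕ} {i : ℕ → ℕ} (hi : IsTSpread t d i) (hl : 1 ≤ l)
    (hld : l + 1 ≤ d) : i l + t ≤ i (l + 1) :=
  hi.2 (l + 1) (by omega) hld

theorem IsGen.extend {t d p q : ℕ} {i j : ℕ → ℕ} (hi : IsTSpread t d i) (hj : IsGen t p i j)
    (hqd : q ≤ d) : IsGen t q i (fun r => if r ≤ p then j r else i r) := by
  refine ⟨⟨fun r h1 hr => ?_, fun r h2 hr => ?_⟩, fun r h1 hr => ?_⟩
  · dsimp only
    split_ifs with hrp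
    exacts [hj.1.1 r h1 hrp, hi.1 r h1 (by omega)]
  · rcases lt_trichotomy r (p + 1) with hrp | rfl | hrp
    · simp only [if_pos (show r - 1 ≤ p by omega), if_pos (show r ≤ p by omega)]
      exact hj.1.2 r h2 (by omega)
    · have hjp : j p ≤ i p := hj.2 p (by omega) le_rfl
      have hip : i p + t ≤ i (p + 1) := hi.add_le_succ (by omega) (by omega)
      simp only [Nat.add_sub_cancel, le_rfl, if_true, if_neg (Nat.not_succ_le_self p)]
      omega
    · simp only [if_neg (show ¬r - 1 ≤ p by omega), if_neg (show ¬r ≤ p by omega)]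
      exact hi.2 r h2 (by omega)
  · dsimp only
    split_ifs with hrp
    exacts [hj.2 r h1 hrp, le_rfl]

namespace Greedy

variable {t : ℕ} {G : Set ℕ} {i : ℕ → ℕ} {m x : ℕ}

/-- `sInf (greedySet t G m)` is the paper's `j_{m+1}`; its value `sInf ∅ = 0` is junk, so the
lemmas below carry the nonemptiness of `greedySet t G m` where they need it. -/
noncomputable def greedySet (t : ℕ) (G : Set ℕ) : ℕ → Set ℕ
  | 0 => G
  | m + 1 => {x ∈ G | sInf (greedySet t G m) + t ≤ x}

noncomputable def greedy (t : ℕ) (G : Set ℕ) (m : ℕ) : ℕ := sInf (greedySet t G m)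

def GreedyFits (t : ℕ) (G : Set ℕ) (i : ℕ → ℕ) (m : ℕ) : Prop :=
  (greedySet t G m).Nonempty ∧ greedy t G m ≤ i (m + 1)

theorem greedySet_subset : ∀ m, greedySet t G m ⊆ G
  | 0 => subset_rfl
  | _ + 1 => fun _ hx => hx.1

theorem greedy_le (hx : x ∈ greedySet t G m) : greedy t G m ≤ x := Nat.sInf_le hx

theorem greedy_mem (h : (greedySet t G m).Nonempty) : greedy t G m ∈ G :=
  greedySet_subset m (Nat.sInf_mem h)

theorem greedy_add_le (h : (greedySet t G (m + 1)).Nonempty) :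
    greedy t G m + t ≤ greedy t G (m + 1) :=
  (Nat.sInf_mem h).2

theorem exists_window_or_mem_greedySet_succ (hx : x ∈ G) :
    ∀ m, (∃ r ≤ m, greedy t G r ≤ x ∧ x < greedy t G r + t) ∨ x ∈ greedySet t G (m + 1)
  | 0 => by
    by_cases hlt : x < greedy t G 0 + t
    · exact .inl ⟨0, le_rfl, greedy_le hx, hlt⟩
    · exact .inr ⟨hx, not_lt.mp hlt⟩
  | m + 1 => by
    rcases exists_window_or_mem_greedySet_succ hx m with ⟨r, hr, hwin⟩ | hmem
    · exact .inl ⟨r, hr.trans m.le_succ, hwin⟩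
    by_cases hlt : x < greedy t G (m + 1) + t
    · exact .inl ⟨m + 1, le_rfl, greedy_le hmem, hlt⟩
    · exact .inr ⟨hx, not_lt.mp hlt⟩

theorem isGen_greedy (hG : ∀ x ∈ G, 1 ≤ x) {p : ℕ} (hfits : ∀ l < p, GreedyFits t G i l) :
    IsGen t p i (fun r => greedy t G (r - 1)) := by
  refine ⟨⟨fun r h1 hr => hG _ (greedy_mem (hfits (r - 1) (by omega)).1), fun r h2 hr => ?_⟩,
    fun r h1 hr => ?_⟩
  · obtain ⟨r, rfl⟩ : ∃ r', r = r' + 2 := ⟨r - 2, by omega⟩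
    exact greedy_add_le (hfits (r + 1) (by omega)).1
  · obtain ⟨r, rfl⟩ : ∃ r', r = r' + 1 := ⟨r - 1, by omega⟩
    exact (hfits r (by omega)).2

end Greedy

open Greedy in
theorem faces_contained_in_three_types_general
    (t d n : ℕ)
    (i : ℕ → ℕ) (hi : IsTSpread t d i) (hn : i d = n)
    (G : ℕ → Prop) (hG : ∀ x, G x → 1 ≤ x ∧ x ≤ n)
    (hface : ¬ ∃ k, IsGen t d i k ∧ ∀ l, 1 ≤ l → l ≤ d → G (k l)) :
    -- (i) a union of `d-1` intervals `[j_r, j_r + t - 1]`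
    (∃ j : ℕ → ℕ,
      (∀ r, 1 ≤ r → r ≤ d - 1 → 1 ≤ j r ∧ j r ≤ i r) ∧
      (∀ r, 2 ≤ r → r ≤ d - 1 → j (r - 1) + t ≤ j r) ∧
      ∀ x, G x → ∃ r, 1 ≤ r ∧ r ≤ d - 1 ∧ j r ≤ x ∧ x < j r + t) ∨
    -- (ii) the interval `{i_1 + 1, …, n}`
    (∀ x, G x → i 1 + 1 ≤ x) ∨
    -- (iii) `s-1` intervals together with `[i_s + 1, n]`
    (∃ s, 2 ≤ s ∧ s ≤ d - 1 ∧ ∃ j : ℕ → ℕ,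
      (∀ r, 1 ≤ r → r ≤ s - 1 → 1 ≤ j r ∧ j r ≤ i r) ∧
      (∀ r, 2 ≤ r → r ≤ s - 1 → j (r - 1) + t ≤ j r) ∧
      j (s - 1) + t ≤ i s + 1 ∧
      ∀ x, G x → (∃ r, 1 ≤ r ∧ r ≤ s - 1 ∧ j r ≤ x ∧ x < j r + t) ∨ i s + 1 ≤ x) := by
  set S : Set ℕ := {x | G x}
  have hSn : ∀ x ∈ S, 1 ≤ x ∧ x ≤ n := hG
  obtain ⟨l, hld, hl⟩ : ∃ l < d, ¬GreedyFits t S i l := by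
    by_contra! hall
    exact hface ⟨_, isGen_greedy (fun x hx => (hSn x hx).1) hall,
      fun l _ hl => greedy_mem (hall (l - 1) (by omega)).1⟩
  classical
  have hunfit : ∃ l, ¬GreedyFits t S i l := ⟨l, hl⟩
  obtain ⟨l₀, hl₀d, hfail, hfits⟩ : ∃ l₀ < d, ¬GreedyFits t S i l₀ ∧ ∀ l < l₀, GreedyFits t S i l :=
    ⟨Nat.find hunfit, (Nat.find_min' hunfit hl).trans_lt hld, Nat.find_spec hunfit,
      fun _ h => not_not.mp (Nat.find_min hunfit h)⟩
  rcases l₀ with _ | m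
  · refine .inr (.inl fun x hx => ?_)
    have : ¬greedy t S 0 ≤ i 1 := not_and.mp hfail ⟨x, hx⟩
    have := greedy_le (t := t) (G := S) (m := 0) hx
    omega
  have hj := isGen_greedy (fun x hx => (hSn x hx).1) hfits
  have hcover := fun x (hx : x ∈ S) => exists_window_or_mem_greedySet_succ (t := t) hx m
  by_cases hne : (greedySet t S (m + 1)).Nonempty
  · have hover : i (m + 2) < greedy t S (m + 1) := not_le.mp (not_and.mp hfail hne)
    have hsd : m + 2 < d := lt_of_le_of_ne hl₀d fun hd => by
      subst hd
      have := (hSn _ (greedy_mem hne)).2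
      omega
    have hjm : greedy t S m + t ≤ i (m + 2) :=
      (Nat.add_le_add_right (hfits m m.lt_succ_self).2 t).trans (hi.add_le_succ (by omega) hsd.le)
    refine .inr (.inr ⟨m + 2, by omega, by omega, _, fun r h1 hr => ⟨hj.1.1 r h1 hr, hj.2 r h1 hr⟩,
      hj.1.2, by simpa using hjm.trans (Nat.le_succ _), fun x hx => ?_⟩)
    rcases hcover x hx with ⟨r, hr, hwin⟩ | hmem
    · exact .inl ⟨r + 1, by omega, by omega, by simpa using hwin⟩
    · exact .inr (hover.trans_le (greedy_le hmem))
  · have hj' := hj.extend hi (q := d - 1) (by omega)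
    refine .inl ⟨_, fun r h1 hr => ⟨hj'.1.1 r h1 hr, hj'.2 r h1 hr⟩, hj'.1.2, fun x hx => ?_⟩
    rcases hcover x hx with ⟨r, hr, hwin⟩ | hmem
    · exact ⟨r + 1, by omega, by omega, by simpa [show r ≤ m by omega] using hwin⟩
    · exact absurd ⟨x, hmem⟩ hne

theorem faces_contained_in_three_types
    (t d n : ℕ) (ht : 1 ≤ t) (hd : 2 ≤ d)
    (i : ℕ → ℕ) (hi : IsTSpread t d i) (hn : i d = n)
    (hfull : ∀ m, 1 ≤ m → m ≤ n → ∃ k l, IsGen t d i k ∧ 1 ≤ l ∧ l ≤ d ∧ k l = m)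
    (G : ℕ → Prop) (hG : ∀ x, G x → 1 ≤ x ∧ x ≤ n)
    (hface : ¬ ∃ k, IsGen t d i k ∧ ∀ l, 1 ≤ l → l ≤ d → G (k l)) :
    -- (i) a union of `d-1` intervals `[j_r, j_r + t - 1]`
    (∃ j : ℕ → ℕ,
      (∀ r, 1 ≤ r → r ≤ d - 1 → 1 ≤ j r ∧ j r ≤ i r) ∧
      (∀ r, 2 ≤ r → r ≤ d - 1 → j (r - 1) + t ≤ j r) ∧
      ∀ x, G x → ∃ r, 1 ≤ r ∧ r ≤ d - 1 ∧ j r ≤ x ∧ x < j r + t) ∨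
    -- (ii) the interval `{i_1 + 1, …, n}`
    (∀ x, G x → i 1 + 1 ≤ x) ∨
    -- (iii) `s-1` intervals together with `[i_s + 1, n]`
    (∃ s, 2 ≤ s ∧ s ≤ d - 1 ∧ ∃ j : ℕ → ℕ,
      (∀ r, 1 ≤ r → r ≤ s - 1 → 1 ≤ j r ∧ j r ≤ i r) ∧
      (∀ r, 2 ≤ r → r ≤ s - 1 → j (r - 1) + t ≤ j r) ∧
      j (s - 1) + t ≤ i s + 1 ∧
      ∀ x, G x → (∃ r, 1 ≤ r ∧ r ≤ s - 1 ∧ j r ≤ x ∧ x < j r + t) ∨ i s + 1 ≤ x) :=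
  faces_contained_in_three_types_general t d n i hi hn G hG hface
end

section
/- Let t ≥ 1 and u = x_{i_1}···x_{i_d} a t-spread monomial. The Alexander dual generators of B_t(u) of type (3) have linear quotients: ordering w_1 = x_1···x_{i_1} first, then the monomials w = (x_1···x_{i_s}) / (v_{j_1}···v_{j_{s-1}}) (where v_j = x_j x_{j+1}···x_{j+t-1}, 2 ≤ s ≤ d-1, j_l ≤ i_l, j_l - j_{l-1} ≥ t) decreasingly in the pure lexicographic order, then the monomials (x_1···x_n)/(v_{j_1}···v_{j_{d-1}}) decreasingly in pure lex, for every j > 1 and g < j there exists an earlier generator w in the list and a variable x_l with x_l = w / gcd(w, w_j) and x_l dividing w_g / gcd(w_g, w_j). -/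
/-- `A >_lex B` for squarefree monomials (pure lexicographic order with
`x_1 > x_2 > ⋯`). -/
def LexGT (A B : Finset ℕ) : Prop :=
  ∃ m, m ∈ A ∧ m ∉ B ∧ ∀ p, p < m → (p ∈ A ↔ p ∈ B)

/-- Type (2): the generator `x_1 ⋯ x_{i_1}`. -/
def TypeA (i1 : ℕ) (W : Finset ℕ) : Prop :=
  W = Finset.Icc 1 i1

/-- Type (3): `(x_1 ⋯ x_{i_s}) / (v_{j_1} ⋯ v_{j_{s-1}})` with `2 ≤ s ≤ d-1`,
`j_l ≤ i_l`, `j_l - j_{l-1} ≥ t`. -/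
def TypeMid (t d : ℕ) (i : ℕ → ℕ) (W : Finset ℕ) : Prop :=
  ∃ s, 2 ≤ s ∧ s ≤ d - 1 ∧ ∃ j : ℕ → ℕ,
    (∀ r, 1 ≤ r → r ≤ s - 1 → 1 ≤ j r ∧ j r ≤ i r) ∧
    (∀ r, 2 ≤ r → r ≤ s - 1 → j (r - 1) + t ≤ j r) ∧
    W = Finset.Icc 1 (i s) \
      (Finset.Icc 1 (s - 1)).biUnion (fun r => Finset.Icc (j r) (j r + t - 1))

/-- Type (1): `(x_1 ⋯ x_n) / (v_{j_1} ⋯ v_{j_{d-1}})`. -/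
def TypeTop (t d n : ℕ) (i : ℕ → ℕ) (W : Finset ℕ) : Prop :=
  ∃ j : ℕ → ℕ,
    (∀ r, 1 ≤ r → r ≤ d - 1 → 1 ≤ j r ∧ j r ≤ i r) ∧
    (∀ r, 2 ≤ r → r ≤ d - 1 → j (r - 1) + t ≤ j r) ∧
    W = Finset.Icc 1 n \
      (Finset.Icc 1 (d - 1)).biUnion (fun r => Finset.Icc (j r) (j r + t - 1))

/-- Minimal generators of the Alexander dual ideal `B_t(u)^∨`. -/
def DualGen (t d n : ℕ) (i : ℕ → ℕ) (W : Finset ℕ) : Prop :=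
  TypeA (i 1) W ∨ TypeMid t d i W ∨ TypeTop t d n i W

/-- `W` comes strictly before `W'` in the linear-quotients order: `w₁` first,
then type (3) in decreasing pure lex, then type (1) in decreasing pure lex. -/
def Earlier (t d n : ℕ) (i : ℕ → ℕ) (W W' : Finset ℕ) : Prop :=
  (TypeA (i 1) W ∧ ¬ TypeA (i 1) W') ∨
  (TypeMid t d i W ∧ TypeMid t d i W' ∧ LexGT W W') ∨
  (TypeMid t d i W ∧ TypeTop t d n i W') ∨
  (TypeTop t d n i W ∧ TypeTop t d n i W' ∧ LexGT W W')

def Gapped (t k : ℕ) (j : ℕ → ℕ) : Prop :=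
  ∀ r, 2 ≤ r → r ≤ k → j (r - 1) + t ≤ j r

namespace Gapped

variable {t k : ℕ} {j : ℕ → ℕ}

theorem add_mul_le (hj : Gapped t k j) {a b : ℕ} (ha : 1 ≤ a) (hab : a ≤ b) (hb : b ≤ k) :
    j a + (b - a) * t ≤ j b := by
  induction b, hab using Nat.le_induction with
  | base => simp
  | succ b hab ih =>
    have hstep := hj (b + 1) (by omega) hb
    rw [Nat.add_sub_cancel] at hstep
    rw [show b + 1 - a = (b - a) + 1 by omega, Nat.add_mul, one_mul, ← Nat.add_assoc]
    exact (Nat.add_le_add_right (ih (by omega)) t).trans hstep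

theorem le (hj : Gapped t k j) {a b : ℕ} (ha : 1 ≤ a) (hab : a ≤ b) (hb : b ≤ k) :
    j a ≤ j b :=
  (Nat.le_add_right _ _).trans (hj.add_mul_le ha hab hb)

theorem add_le (hj : Gapped t k j) {a b : ℕ} (ha : 1 ≤ a) (hab : a < b) (hb : b ≤ k) :
    j a + t ≤ j b :=
  (Nat.add_le_add_left (Nat.le_mul_of_pos_left t (by omega)) _).trans
    (hj.add_mul_le ha hab.le hb)

theorem mono (hj : Gapped t k j) {k' : ℕ} (hk : k' ≤ k) : Gapped t k' j :=
  fun r hr hrk => hj r hr (hrk.trans hk)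

end Gapped

def blocks (t : ℕ) (j : ℕ → ℕ) (k : ℕ) : Finset ℕ :=
  (Finset.Icc 1 k).biUnion fun r => Finset.Icc (j r) (j r + t - 1)

section Blocks

variable {t k q x : ℕ} {j : ℕ → ℕ}

theorem mem_blocks : x ∈ blocks t j k ↔ ∃ r, 1 ≤ r ∧ r ≤ k ∧ j r ≤ x ∧ x ≤ j r + t - 1 := by
  simp only [blocks, Finset.mem_biUnion, Finset.mem_Icc, and_assoc]

@[simp]
theorem blocks_zero : blocks t j 0 = ∅ := by
  simp [blocks]

theorem start_mem_blocks (ht : 1 ≤ t) (hq : 1 ≤ q) (hqk : q ≤ k) : j q ∈ blocks t j k :=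
  mem_blocks.mpr ⟨q, hq, hqk, le_rfl, by omega⟩

theorem zero_notMem_blocks (hj : ∀ r, 1 ≤ r → r ≤ k → 1 ≤ j r) : 0 ∉ blocks t j k := by
  rw [mem_blocks]
  rintro ⟨r, hr, hrk, hle, -⟩
  exact absurd (hj r hr hrk) (by omega)

theorem start_notMem_blocks_pred (ht : 1 ≤ t) (hj : Gapped t k j) (hqk : q ≤ k) :
    j q ∉ blocks t j (q - 1) := by
  rw [mem_blocks]
  rintro ⟨r, hr, hrq, -, hle⟩
  have := hj.add_le hr (by omega) hqk
  omega

theorem mem_blocks_iff_of_lt (hj : Gapped t k j) (hq : 1 ≤ q) (hqk : q ≤ k) (hx : x < j q) :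
    x ∈ blocks t j k ↔ x ∈ blocks t j (q - 1) := by
  simp only [mem_blocks]
  constructor
  · rintro ⟨r, hr, hrk, hle, hle'⟩
    refine ⟨r, hr, ?_, hle, hle'⟩
    by_contra hrq
    have := hj.le hq (show q ≤ r by omega) hrk
    omega
  · rintro ⟨r, hr, hrq, hle, hle'⟩
    exact ⟨r, hr, by omega, hle, hle'⟩

theorem blocks_congr {j' : ℕ → ℕ} (h : ∀ r, 1 ≤ r → r ≤ k → j r = j' r) :
    blocks t j k = blocks t j' k := by
  ext x
  simp only [mem_blocks]
  constructor <;> rintro ⟨r, hr, hrk, hle, hle'⟩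
  · exact ⟨r, hr, hrk, h r hr hrk ▸ hle, h r hr hrk ▸ hle'⟩
  · exact ⟨r, hr, hrk, (h r hr hrk).symm ▸ hle, (h r hr hrk).symm ▸ hle'⟩

/-- Pigeonhole: a block of length `t` contains at most one term of a `t`-gapped sequence. -/
theorem le_of_forall_mem_blocks (ht : 1 ≤ t) {c : ℕ} {h : ℕ → ℕ} (hh : Gapped t c h)
    (hmem : ∀ r, 1 ≤ r → r ≤ c → h r ∈ blocks t j k) : c ≤ k := by
  have hblock : ∀ r ∈ Finset.Icc 1 c, ∃ b ∈ Finset.Icc 1 k, j b ≤ h r ∧ h r ≤ j b + t - 1 := by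
    intro r hr
    rw [Finset.mem_Icc] at hr
    obtain ⟨b, hb, hbk, hle, hle'⟩ := mem_blocks.mp (hmem r hr.1 hr.2)
    exact ⟨b, Finset.mem_Icc.mpr ⟨hb, hbk⟩, hle, hle'⟩
  choose! f hf hfj using hblock
  have hinj : Set.InjOn f (Finset.Icc 1 c) := by
    intro a ha b hb hab
    simp only [Finset.coe_Icc, Set.mem_Icc] at ha hb
    have ha' := hfj a (Finset.mem_Icc.mpr ha)
    have hb' := hfj b (Finset.mem_Icc.mpr hb)
    rw [hab] at ha'
    by_contra hne
    rcases Nat.lt_or_gt_of_ne hne with hlt | hlt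
    · have := hh.add_le ha.1 hlt hb.2
      omega
    · have := hh.add_le hb.1 hlt ha.2
      omega
  simpa using Finset.card_le_card_of_injOn f hf hinj

/-- Descent: `j q - 1`, which lies in the block `h p`, also lies in a block of `j`; that block
must end exactly at `j q - 1`, so its start lies strictly inside `h p`, with the roles of `j` and
`h` swapped. -/
theorem not_lt_start_add_of_blocks_agree {k' B : ℕ} {h : ℕ → ℕ} (hj : Gapped t k j)
    (hh : Gapped t k' h) (hagree : ∀ y < B, y ∈ blocks t j k ↔ y ∈ blocks t h k')
    {p : ℕ} (hq : 1 ≤ q) (hqk : q ≤ k) (hp : 1 ≤ p) (hpk : p ≤ k') (hqB : j q ≤ B)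
    (hlt : h p < j q) : ¬ j q < h p + t := by
  obtain ⟨v, hv⟩ : ∃ v, j q = v := ⟨_, rfl⟩
  induction v using Nat.strong_induction_on generalizing j k h k' q p with
  | _ v ih =>
    intro hlt'
    have hprev : j q - 1 ∈ blocks t j k :=
      (hagree _ (by omega)).mpr (mem_blocks.mpr ⟨p, hp, hpk, by omega, by omega⟩)
    obtain ⟨r, hr, hrk, hle, hle'⟩ := mem_blocks.mp hprev
    have hrq : r < q := by
      by_contra hrq
      have := hj.le hq (show q ≤ r by omega) hrk
      omega
    have hgap := hj.add_le hr hrq hqk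
    exact ih (h p) (by omega) hh hj (fun y hy => (hagree y hy).symm) hp hpk hr hrk
      (by omega) (by omega) rfl (by omega)

end Blocks

/-- Moves the block starting at `j q` one step to the right, pushing along every later block
that it would otherwise overlap. -/
def shiftBlocks (t q : ℕ) (j : ℕ → ℕ) (r : ℕ) : ℕ :=
  if r < q then j r else max (j r) (j q + 1 + (r - q) * t)

section ShiftBlocks

variable {t k q r : ℕ} {j : ℕ → ℕ}

theorem shiftBlocks_of_lt (hr : r < q) : shiftBlocks t q j r = j r := if_pos hr

theorem shiftBlocks_of_le (hr : q ≤ r) :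
    shiftBlocks t q j r = max (j r) (j q + 1 + (r - q) * t) :=
  if_neg (Nat.not_lt.mpr hr)

theorem shiftBlocks_self : shiftBlocks t q j q = j q + 1 := by
  rw [shiftBlocks_of_le le_rfl, Nat.sub_self, Nat.zero_mul, Nat.add_zero]
  exact max_eq_right (Nat.le_succ _)

theorem le_shiftBlocks : j r ≤ shiftBlocks t q j r := by
  unfold shiftBlocks
  split_ifs
  exacts [le_rfl, le_max_left _ _]

theorem Gapped.shiftBlocks (hj : Gapped t k j) : Gapped t k (shiftBlocks t q j) := by
  intro r hr hrk
  rcases Nat.lt_trichotomy r q with hrq | rfl | hrq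
  · rw [shiftBlocks_of_lt hrq, shiftBlocks_of_lt (by omega)]
    exact hj r hr hrk
  · rw [shiftBlocks_self, shiftBlocks_of_lt (by omega)]
    have := hj r hr hrk
    omega
  · rw [shiftBlocks_of_le hrq.le, shiftBlocks_of_le (by omega), ← max_add_add_right,
      show j q + 1 + (r - 1 - q) * t + t = j q + 1 + (r - q) * t by
        rw [show r - q = (r - 1 - q) + 1 by omega, Nat.add_mul, one_mul, Nat.add_assoc]]
    exact max_le_max (hj r hr hrk) le_rfl

theorem shiftBlocks_le_of_lt {d : ℕ} {i : ℕ → ℕ} (hi : Gapped t d i) (hkd : k ≤ d)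
    (hji : ∀ r, 1 ≤ r → r ≤ k → j r ≤ i r) (hq : 1 ≤ q) (hlt : j q < i q) (hr : 1 ≤ r)
    (hrk : r ≤ k) : shiftBlocks t q j r ≤ i r := by
  rcases Nat.lt_or_ge r q with hrq | hrq
  · rw [shiftBlocks_of_lt hrq]
    exact hji r hr hrk
  · rw [shiftBlocks_of_le hrq]
    have := hi.add_mul_le hq hrq (hrk.trans hkd)
    exact max_le (hji r hr hrk) (by omega)

theorem mem_blocks_shiftBlocks_iff {x : ℕ} (hj : Gapped t k j) (hq : 1 ≤ q) (hqk : q ≤ k)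
    (hx : x ≤ j q) : x ∈ blocks t (shiftBlocks t q j) k ↔ x ∈ blocks t j (q - 1) := by
  have hlt : x < shiftBlocks t q j q := by rw [shiftBlocks_self]; omega
  rw [mem_blocks_iff_of_lt hj.shiftBlocks hq hqk hlt]
  rw [blocks_congr fun r _ hr => shiftBlocks_of_lt (show r < q by omega)]

theorem mem_blocks_shiftBlocks_of_mem {x : ℕ} (ht : 1 ≤ t) (hj : Gapped t k j) (hq : 1 ≤ q)
    (hx : x ∈ blocks t j k) (hne : x ≠ j q) : x ∈ blocks t (shiftBlocks t q j) k := by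
  obtain ⟨r, hr, hrk, hle, hle'⟩ := mem_blocks.mp hx
  rcases Nat.lt_or_ge r q with hrq | hrq
  · exact mem_blocks.mpr ⟨r, hr, hrk, by rwa [shiftBlocks_of_lt hrq], by rwa [shiftBlocks_of_lt hrq]⟩
  have hmono : j r ≤ shiftBlocks t q j r := le_shiftBlocks
  by_cases hin : shiftBlocks t q j r ≤ x
  · exact mem_blocks.mpr ⟨r, hr, hrk, hin, by omega⟩
  -- block `r` was pushed: it is adjacent to block `q`, and `x = j r` is covered by block `r - 1`
  have hjr := hj.add_mul_le hq hrq hrk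
  have hpush : shiftBlocks t q j r = j q + 1 + (r - q) * t := by
    rw [shiftBlocks_of_le hrq]
    exact max_eq_right (by rw [shiftBlocks_of_le hrq] at hin; omega)
  have hrq' : q < r := by
    refine lt_of_le_of_ne hrq fun hqr => hne ?_
    subst hqr
    rw [Nat.sub_self, Nat.zero_mul] at hjr hpush
    omega
  have hX : (r - 1 - q) * t + t = (r - q) * t := by
    rw [show r - q = (r - 1 - q) + 1 by omega, Nat.add_mul, one_mul]
  have hprev := hj r (by omega) hrk
  have hprev' : shiftBlocks t q j (r - 1) = max (j (r - 1)) (j q + 1 + (r - 1 - q) * t) :=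
    shiftBlocks_of_le (by omega)
  refine mem_blocks.mpr ⟨r - 1, by omega, by omega, ?_, ?_⟩
  · rw [hprev']
    exact max_le (by omega) (by omega)
  · have := le_max_right (j (r - 1)) (j q + 1 + (r - 1 - q) * t)
    omega

end ShiftBlocks

theorem lexGT_of_sdiff_eq_singleton {A B : Finset ℕ} {m : ℕ} (h : A \ B = {m})
    (hagree : ∀ p < m, p ∈ A ↔ p ∈ B) : LexGT A B := by
  have hm : m ∈ A \ B := h ▸ Finset.mem_singleton_self m
  exact ⟨m, (Finset.mem_sdiff.mp hm).1, (Finset.mem_sdiff.mp hm).2, hagree⟩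

/-- The monomial `(x_1 ⋯ x_{i_s}) / (v_{j_1} ⋯ v_{j_{s-1}})`. -/
def dualMonomial (t : ℕ) (i : ℕ → ℕ) (s : ℕ) (j : ℕ → ℕ) : Finset ℕ :=
  Finset.Icc 1 (i s) \ blocks t j (s - 1)

def Admissible (t : ℕ) (i : ℕ → ℕ) (k : ℕ) (j : ℕ → ℕ) : Prop :=
  (∀ r, 1 ≤ r → r ≤ k → 1 ≤ j r ∧ j r ≤ i r) ∧ Gapped t k j

def IsDualMonomial (t : ℕ) (i : ℕ → ℕ) (s : ℕ) (W : Finset ℕ) : Prop :=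
  ∃ j, Admissible t i (s - 1) j ∧ W = dualMonomial t i s j

section DualMonomial

variable {t d s q : ℕ} {i j : ℕ → ℕ}

theorem mem_dualMonomial {x : ℕ} :
    x ∈ dualMonomial t i s j ↔ (1 ≤ x ∧ x ≤ i s) ∧ x ∉ blocks t j (s - 1) := by
  rw [dualMonomial, Finset.mem_sdiff, Finset.mem_Icc]

theorem Admissible.mono {k k' : ℕ} (hj : Admissible t i k j) (hk : k' ≤ k) :
    Admissible t i k' j :=
  ⟨fun r hr hrk => hj.1 r hr (hrk.trans hk), hj.2.mono hk⟩

theorem top_mem_dualMonomial (ht : 1 ≤ t) (hi : IsTSpread t d i) (hs : 1 ≤ s) (hsd : s ≤ d)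
    (hj : Admissible t i (s - 1) j) : i s ∈ dualMonomial t i s j := by
  refine mem_dualMonomial.mpr ⟨⟨hi.1 s hs hsd, le_rfl⟩, ?_⟩
  rw [mem_blocks]
  rintro ⟨r, hr, hrs, -, hle⟩
  have := (hj.1 r hr hrs).2
  have := (show Gapped t d i from hi.2).add_le hr (show r < s by omega) hsd
  omega

theorem dualMonomial_shiftBlocks_spec (ht : 1 ≤ t) (hi : IsTSpread t d i) (hsd : s ≤ d)
    (hj : Admissible t i (s - 1) j) (hq : 1 ≤ q) (hqs : q ≤ s - 1) (hlt : j q < i q) :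
    IsDualMonomial t i s (dualMonomial t i s (shiftBlocks t q j)) ∧
      dualMonomial t i s (shiftBlocks t q j) \ dualMonomial t i s j = {j q} ∧
      LexGT (dualMonomial t i s (shiftBlocks t q j)) (dualMonomial t i s j) := by
  have hi' : Gapped t d i := hi.2
  have hjq : j q ≤ i s := (hj.1 q hq hqs).2.trans (hi'.le hq (by omega) hsd)
  have hjq_notMem : j q ∉ blocks t (shiftBlocks t q j) (s - 1) := by
    rw [mem_blocks_shiftBlocks_iff hj.2 hq hqs le_rfl]
    exact start_notMem_blocks_pred ht hj.2 hqs
  have hadm : Admissible t i (s - 1) (shiftBlocks t q j) :=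
    ⟨fun r hr hrs => ⟨(hj.1 r hr hrs).1.trans le_shiftBlocks,
      shiftBlocks_le_of_lt hi' (by omega) (fun r hr hrs => (hj.1 r hr hrs).2) hq hlt hr hrs⟩,
      hj.2.shiftBlocks⟩
  have hdiff : dualMonomial t i s (shiftBlocks t q j) \ dualMonomial t i s j = {j q} := by
    ext x
    simp only [Finset.mem_sdiff, mem_dualMonomial, Finset.mem_singleton]
    constructor
    · rintro ⟨⟨hx, hxj'⟩, hxj⟩
      by_contra hne
      exact hxj' (mem_blocks_shiftBlocks_of_mem ht hj.2 hq (by tauto) hne)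
    · rintro rfl
      exact ⟨⟨⟨(hj.1 q hq hqs).1, hjq⟩, hjq_notMem⟩,
        fun h => h.2 (start_mem_blocks ht hq hqs)⟩
  refine ⟨⟨_, hadm, rfl⟩, hdiff, lexGT_of_sdiff_eq_singleton hdiff fun p hp => ?_⟩
  rw [mem_dualMonomial, mem_dualMonomial, mem_blocks_shiftBlocks_iff hj.2 hq hqs hp.le,
    ← mem_blocks_iff_of_lt hj.2 hq hqs hp]

theorem dualMonomial_truncate_spec (ht : 1 ≤ t) (hi : IsTSpread t d i) (hsd : s ≤ d)
    (hj : Admissible t i (s - 1) j) (hq : 1 ≤ q) (hqs : q ≤ s - 1) (heq : j q = i q) :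
    IsDualMonomial t i q (dualMonomial t i q j) ∧
      dualMonomial t i q j \ dualMonomial t i s j = {j q} ∧
      LexGT (dualMonomial t i q j) (dualMonomial t i s j) := by
  have hiq : i q ≤ i s := (show Gapped t d i from hi.2).le hq (by omega) hsd
  have hdiff : dualMonomial t i q j \ dualMonomial t i s j = {j q} := by
    ext x
    simp only [Finset.mem_sdiff, mem_dualMonomial, Finset.mem_singleton]
    constructor
    · rintro ⟨⟨⟨hx, hxq⟩, hxj⟩, hxW⟩
      have hxs : x ∈ blocks t j (s - 1) := by
        by_contra h
        exact hxW ⟨⟨hx, by omega⟩, h⟩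
      by_contra hne
      exact hxj ((mem_blocks_iff_of_lt hj.2 hq hqs (by omega)).mp hxs)
    · rintro rfl
      exact ⟨⟨⟨(hj.1 q hq hqs).1, heq.le⟩, start_notMem_blocks_pred ht hj.2 hqs⟩,
        fun h => h.2 (start_mem_blocks ht hq hqs)⟩
  refine ⟨⟨j, hj.mono (by omega), rfl⟩, hdiff, lexGT_of_sdiff_eq_singleton hdiff fun p hp => ?_⟩
  rw [mem_dualMonomial, mem_dualMonomial, mem_blocks_iff_of_lt hj.2 hq hqs hp]
  constructor <;> rintro ⟨⟨hp1, -⟩, hpj⟩ <;> exact ⟨⟨hp1, by omega⟩, hpj⟩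

theorem exists_isDualMonomial_sdiff_eq (ht : 1 ≤ t) (hi : IsTSpread t d i) (hsd : s ≤ d)
    (hj : Admissible t i (s - 1) j) (hq : 1 ≤ q) (hqs : q ≤ s - 1) :
    ∃ s', 1 ≤ s' ∧ s' ≤ s ∧ ∃ W', IsDualMonomial t i s' W' ∧
      W' \ dualMonomial t i s j = {j q} ∧ LexGT W' (dualMonomial t i s j) := by
  rcases (hj.1 q hq hqs).2.lt_or_eq with hlt | heq
  · exact ⟨s, by omega, le_rfl, _, dualMonomial_shiftBlocks_spec ht hi hsd hj hq hqs hlt⟩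
  · exact ⟨q, hq, by omega, _, dualMonomial_truncate_spec ht hi hsd hj hq hqs heq⟩

end DualMonomial

section StartMem

variable {t d s σ : ℕ} {i j h : ℕ → ℕ}

theorem exists_start_mem_of_lt (ht : 1 ≤ t) (hi : Gapped t d i) (hsd : s ≤ d)
    (hj : Admissible t i (s - 1) j) (hσ : 1 ≤ σ) (hσs : σ < s) :
    ∃ q, 1 ≤ q ∧ q ≤ s - 1 ∧ j q ∈ dualMonomial t i σ h := by
  by_contra! hnot
  have hmem : ∀ r, 1 ≤ r → r ≤ σ → j r ∈ blocks t h (σ - 1) := by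
    intro r hr hrσ
    have hjr := hj.1 r hr (by omega)
    have := hi.le hr hrσ (by omega)
    by_contra hjr'
    exact hnot r hr (by omega) (mem_dualMonomial.mpr ⟨⟨hjr.1, by omega⟩, hjr'⟩)
  have := le_of_forall_mem_blocks ht (hj.2.mono (show σ ≤ s - 1 by omega)) hmem
  omega

theorem mem_blocks_iff_of_mem_dualMonomial_iff {x : ℕ} (hx : 1 ≤ x) (hxσ : x ≤ i σ)
    (hxs : x ≤ i s) (hiff : x ∈ dualMonomial t i σ h ↔ x ∈ dualMonomial t i s j) :
    x ∈ blocks t h (σ - 1) ↔ x ∈ blocks t j (s - 1) := by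
  simp only [mem_dualMonomial, hx, hxσ, hxs, and_self, true_and] at hiff
  exact not_iff_not.mp hiff

/-- The first variable `m` on which `W_g >_lex W` differ is the start of a block of `W`: were it
inside one, `m - 1` would end a block of `W_g`, contradicting
`not_lt_start_add_of_blocks_agree`. And `m > i s` is impossible: then `W_g` contains `x_{i_s}`,
so its first `s` blocks lie below `i s`, where its blocks are those of `W`. -/
theorem exists_start_mem_of_lexGT (ht : 1 ≤ t) (hi : IsTSpread t d i) (hs : 1 ≤ s)
    (hsd : s ≤ d) (hj : Admissible t i (s - 1) j) (hσ : 1 ≤ σ)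
    (hh : Admissible t i (σ - 1) h) (hlex : LexGT (dualMonomial t i σ h) (dualMonomial t i s j)) :
    ∃ q, 1 ≤ q ∧ q ≤ s - 1 ∧ j q ∈ dualMonomial t i σ h := by
  obtain ⟨m, hmh, hmj, hagree⟩ := hlex
  have hmh' := mem_dualMonomial.mp hmh
  by_cases hms : m ≤ i s
  · have hmj' : m ∈ blocks t j (s - 1) := by
      by_contra hmj'
      exact hmj (mem_dualMonomial.mpr ⟨⟨hmh'.1.1, hms⟩, hmj'⟩)
    obtain ⟨q, hq, hqs, hle, hle'⟩ := mem_blocks.mp hmj'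
    refine ⟨q, hq, hqs, ?_⟩
    suffices hqm : j q = m by rwa [hqm]
    by_contra hne
    have hblocks : ∀ y < m, y ∈ blocks t j (s - 1) ↔ y ∈ blocks t h (σ - 1) := by
      intro y hy
      rcases Nat.eq_zero_or_pos y with rfl | hy
      · exact iff_of_false (zero_notMem_blocks fun r hr hrs => (hj.1 r hr hrs).1)
          (zero_notMem_blocks fun r hr hrs => (hh.1 r hr hrs).1)
      · exact (mem_blocks_iff_of_mem_dualMonomial_iff hy (by omega) (by omega)
          (hagree y (by omega))).symm
    obtain ⟨p, hp, hpσ, hle₂, hle₂'⟩ := mem_blocks.mp <|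
      (hblocks (m - 1) (by omega)).mp (mem_blocks.mpr ⟨q, hq, hqs, by omega, by omega⟩)
    have hpm : h p + t = m := by
      by_contra hpm
      exact hmh'.2 (mem_blocks.mpr ⟨p, hp, hpσ, by omega, by omega⟩)
    exact not_lt_start_add_of_blocks_agree hj.2 hh.2 hblocks hq hqs hp hpσ (by omega)
      (by omega) (by omega)
  · exfalso
    have hsσ : s < σ := by
      by_contra hσs
      have := (show Gapped t d i from hi.2).le hσ (show σ ≤ s by omega) hsd
      omega
    have his := mem_dualMonomial.mp <|
      (hagree (i s) (by omega)).mpr (top_mem_dualMonomial ht hi hs hsd hj)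
    have hhs := (hh.1 s hs (by omega)).2
    have hend : h s + t - 1 < i s := by
      by_contra hend
      exact his.2 (mem_blocks.mpr ⟨s, hs, by omega, hhs, by omega⟩)
    have hmem : ∀ r, 1 ≤ r → r ≤ s → h r ∈ blocks t j (s - 1) := by
      intro r hr hrs
      have := hh.2.le hr hrs (show s ≤ σ - 1 by omega)
      exact (mem_blocks_iff_of_mem_dualMonomial_iff (hh.1 r hr (by omega)).1 (by omega)
        (by omega) (hagree _ (by omega))).mp (start_mem_blocks ht hr (by omega))
    have := le_of_forall_mem_blocks ht (hh.2.mono (show s ≤ σ - 1 by omega)) hmem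
    omega

end StartMem

section Types

variable {t d n : ℕ} {i : ℕ → ℕ} {W W' : Finset ℕ}

theorem typeA_iff_isDualMonomial_one : TypeA (i 1) W ↔ IsDualMonomial t i 1 W := by
  constructor
  · intro hW
    refine ⟨id, ⟨fun r hr hr0 => absurd hr0 (by omega), fun r hr hr0 => absurd hr0 (by omega)⟩, ?_⟩
    rw [dualMonomial, Nat.sub_self, blocks_zero, Finset.sdiff_empty]
    exact hW
  · rintro ⟨j, -, rfl⟩
    simp [TypeA, dualMonomial]

theorem typeMid_iff : TypeMid t d i W ↔ ∃ s, 2 ≤ s ∧ s ≤ d - 1 ∧ IsDualMonomial t i s W := by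
  simp only [TypeMid, IsDualMonomial, Admissible, Gapped, dualMonomial, blocks, and_assoc]

theorem typeTop_iff (hn : i d = n) : TypeTop t d n i W ↔ IsDualMonomial t i d W := by
  subst hn
  simp only [TypeTop, IsDualMonomial, Admissible, Gapped, dualMonomial, blocks, and_assoc]

theorem not_typeA_of_isDualMonomial {s : ℕ} (ht : 1 ≤ t) (hi : IsTSpread t d i) (hs : 2 ≤ s)
    (hsd : s ≤ d) (hW : IsDualMonomial t i s W) : ¬ TypeA (i 1) W := by
  obtain ⟨j, hj, rfl⟩ := hW
  intro hA
  have htop := top_mem_dualMonomial ht hi (by omega) hsd hj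
  rw [hA, Finset.mem_Icc] at htop
  have := (show Gapped t d i from hi.2).add_le le_rfl (show 1 < s by omega) hsd
  omega

theorem Earlier.dualGen_left (h : Earlier t d n i W' W) : DualGen t d n i W' := by
  rcases h with ⟨hA, -⟩ | ⟨hM, -⟩ | ⟨hM, -⟩ | ⟨hT, -⟩
  exacts [Or.inl hA, Or.inr (Or.inl hM), Or.inr (Or.inl hM), Or.inr (Or.inr hT)]

theorem earlier_of_isDualMonomial {q s : ℕ} (ht : 1 ≤ t) (hi : IsTSpread t d i)
    (hn : i d = n) (hq : 1 ≤ q) (hqs : q ≤ s) (hs : 2 ≤ s) (hsd : s ≤ d)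
    (hW' : IsDualMonomial t i q W') (hW : IsDualMonomial t i s W) (hlex : LexGT W' W) :
    Earlier t d n i W' W := by
  rcases hq.eq_or_lt with rfl | hq
  · exact Or.inl ⟨typeA_iff_isDualMonomial_one.mpr hW', not_typeA_of_isDualMonomial ht hi hs hsd hW⟩
  rcases Nat.lt_or_ge s d with hsd' | hsd'
  · exact Or.inr <| Or.inl ⟨typeMid_iff.mpr ⟨q, hq, by omega, hW'⟩,
      typeMid_iff.mpr ⟨s, hs, by omega, hW⟩, hlex⟩
  obtain rfl : s = d := by omega
  rcases hqs.eq_or_lt with rfl | hqs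
  · exact Or.inr <| Or.inr <| Or.inr ⟨(typeTop_iff hn).mpr hW', (typeTop_iff hn).mpr hW, hlex⟩
  · exact Or.inr <| Or.inr <| Or.inl ⟨typeMid_iff.mpr ⟨q, hq, by omega, hW'⟩,
      (typeTop_iff hn).mpr hW⟩

theorem exists_isDualMonomial_of_earlier {Wg : Finset ℕ} (hd : 2 ≤ d) (hn : i d = n)
    (hW : DualGen t d n i W) (hE : Earlier t d n i Wg W) :
    ∃ s σ, 2 ≤ s ∧ s ≤ d ∧ 1 ≤ σ ∧ IsDualMonomial t i s W ∧ IsDualMonomial t i σ Wg ∧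
      (σ < s ∨ LexGT Wg W) := by
  rcases hE with ⟨hA, hnA⟩ | ⟨hMg, hM, hlex⟩ | ⟨hMg, hT⟩ | ⟨hTg, hT, hlex⟩
  · have hg := typeA_iff_isDualMonomial_one (t := t) |>.mp hA
    rcases hW with hA' | hM | hT
    · exact absurd hA' hnA
    · obtain ⟨s, hs, hsd, hM⟩ := typeMid_iff.mp hM
      exact ⟨s, 1, hs, by omega, le_rfl, hM, hg, Or.inl (by omega)⟩
    · exact ⟨d, 1, hd, le_rfl, le_rfl, (typeTop_iff hn).mp hT, hg, Or.inl (by omega)⟩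
  · obtain ⟨σ, hσ, -, hMg⟩ := typeMid_iff.mp hMg
    obtain ⟨s, hs, hsd, hM⟩ := typeMid_iff.mp hM
    exact ⟨s, σ, hs, by omega, by omega, hM, hMg, Or.inr hlex⟩
  · obtain ⟨σ, hσ, hσd, hMg⟩ := typeMid_iff.mp hMg
    exact ⟨d, σ, hd, le_rfl, by omega, (typeTop_iff hn).mp hT, hMg, Or.inl (by omega)⟩
  · exact ⟨d, d, hd, le_rfl, by omega, (typeTop_iff hn).mp hT, (typeTop_iff hn).mp hTg,
      Or.inr hlex⟩

end Types

theorem dual_has_linear_quotients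
    (t d n : ℕ) (ht : 1 ≤ t) (hd : 2 ≤ d)
    (i : ℕ → ℕ) (hi : IsTSpread t d i) (hn : i d = n) :
    ∀ W Wg : Finset ℕ, DualGen t d n i W → DualGen t d n i Wg →
      Earlier t d n i Wg W →
      ∃ (W' : Finset ℕ) (l : ℕ), DualGen t d n i W' ∧ Earlier t d n i W' W ∧
        W' \ W = {l} ∧ l ∈ Wg ∧ l ∉ W := by
  intro W Wg hW _ hE
  obtain ⟨s, σ, hs, hsd, hσ, ⟨j, hj, rfl⟩, ⟨h, hh, rfl⟩, hprec⟩ :=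
    exists_isDualMonomial_of_earlier hd hn hW hE
  obtain ⟨q, hq, hqs, hjq⟩ : ∃ q, 1 ≤ q ∧ q ≤ s - 1 ∧ j q ∈ dualMonomial t i σ h := by
    rcases hprec with hσs | hlex
    · exact exists_start_mem_of_lt ht hi.2 hsd hj hσ hσs
    · exact exists_start_mem_of_lexGT ht hi (by omega) hsd hj hσ hh hlex
  obtain ⟨s', hs', hs's, W', hW', hdiff, hlex⟩ :=
    exists_isDualMonomial_sdiff_eq ht hi hsd hj hq hqs
  have hE' := earlier_of_isDualMonomial ht hi hn hs' hs's hs hsd hW' ⟨j, hj, rfl⟩ hlex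
  have hl : j q ∈ W' \ dualMonomial t i s j := hdiff ▸ Finset.mem_singleton_self _
  exact ⟨W', j q, hE'.dualGen_left, hE', hdiff, hjq, (Finset.mem_sdiff.mp hl).2⟩
end

section
/- Let t ≥ 1 and u a t-spread monomial. The t-spread principal Borel ideal B_t(u) satisfies the ℓ-exchange property with respect to the sorting order. -/
/-- The pair `(v, w)` of degree-`d` monomials is sorted:
`v_1 ≤ w_1 ≤ v_2 ≤ w_2 ≤ ⋯ ≤ v_d ≤ w_d`. -/
def SortedPair (d : ℕ) (v w : ℕ → ℕ) : Prop :=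
  (∀ l, 1 ≤ l → l ≤ d → v l ≤ w l) ∧ ∀ l, 1 ≤ l → l ≤ d - 1 → w l ≤ v (l + 1)

/-- The tuple `(f 1, …, f N)` is sorted (pairwise sorted in order). -/
def SortedTuple (d N : ℕ) (f : ℕ → ℕ → ℕ) : Prop :=
  ∀ a b, 1 ≤ a → a ≤ b → b ≤ N → SortedPair d (f a) (f b)

/-- The multiset of indices of the degree-`d` monomial `a`. -/
def mseq (d : ℕ) (a : ℕ → ℕ) : Multiset ℕ :=
  (Finset.Icc 1 d).val.map a

/-- `x_m`-degree of the product `(f 1) ⋯ (f N)` of degree-`d` monomials. -/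
def xdeg (d N : ℕ) (f : ℕ → ℕ → ℕ) (m : ℕ) : ℕ :=
  ∑ a ∈ Finset.Icc 1 N, ∑ l ∈ Finset.Icc 1 d, if f a l = m then 1 else 0

open Finset

lemma IsTSpread.le_of_le {t d : ℕ} {f : ℕ → ℕ} (hf : IsTSpread t d f) {l l' : ℕ}
    (hl : 1 ≤ l) (hll' : l ≤ l') (hl' : l' ≤ d) : f l ≤ f l' := by
  induction l', hll' using Nat.le_induction with
  | base => rfl
  | succ n hn ih =>
    have hstep := hf.2 (n + 1) (by omega) hl'
    rw [Nat.add_sub_cancel] at hstep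
    have := ih (by omega)
    omega

lemma IsGen.update {t d : ℕ} {i a : ℕ → ℕ} (ha : IsGen t d i a) {l x : ℕ}
    (hx : 1 ≤ x) (hxa : x ≤ a l) (hprev : 2 ≤ l → a (l - 1) + t ≤ x) :
    IsGen t d i (Function.update a l x) := by
  refine ⟨⟨fun m hm hmd => ?_, fun m hm hmd => ?_⟩, fun m hm hmd => ?_⟩
  · rcases eq_or_ne m l with rfl | hml
    · simpa using hx
    · simpa [hml] using ha.1.1 m hm hmd
  · have hspread := ha.1.2 m hm hmd
    rcases eq_or_ne m l with rfl | hml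
    · simpa [show m - 1 ≠ m by omega] using hprev hm
    · rcases eq_or_ne (m - 1) l with hml' | hml'
      · simp only [Function.update_apply, hml', hml, if_true, if_false]
        rw [hml'] at hspread
        omega
      · simpa [hml, hml'] using hspread
  · rcases eq_or_ne m l with rfl | hml
    · simpa using hxa.trans (ha.2 m hm hmd)
    · simpa [hml] using ha.2 m hm hmd

lemma cons_mseq_update {d l : ℕ} (hl : l ∈ Icc 1 d) (a : ℕ → ℕ) (x : ℕ) :
    a l ::ₘ mseq d (Function.update a l x) = x ::ₘ mseq d a := by
  have hmem : l ∈ (Icc 1 d).val := hl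
  have hoff : ∀ m ∈ (Icc 1 d).val.erase l, Function.update a l x m = a m := fun m hm =>
    Function.update_of_ne (fun h => (Icc 1 d).nodup.notMem_erase (h ▸ hm)) x a
  rw [mseq, mseq, ← Multiset.cons_erase hmem, Multiset.map_cons, Multiset.map_cons,
    Multiset.map_congr rfl hoff, Function.update_self, Multiset.cons_swap]

/-- A position `(a, l)` stands for the `l`-th index `f a l` of the `a`-th monomial. -/
def positionsBelow (d N : ℕ) (f : ℕ → ℕ → ℕ) (m : ℕ) : Finset (ℕ × ℕ) :=
  (Icc 1 N ×ˢ Icc 1 d).filter fun p => f p.1 p.2 < m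

section SortedTuple

variable {t d N : ℕ} {f g : ℕ → ℕ → ℕ}

lemma mem_positionsBelow {m : ℕ} {p : ℕ × ℕ} :
    p ∈ positionsBelow d N f m ↔ p.1 ∈ Icc 1 N ∧ p.2 ∈ Icc 1 d ∧ f p.1 p.2 < m := by
  simp [positionsBelow, and_assoc]

lemma positionsBelow_mono {m m' : ℕ} (h : m ≤ m') :
    positionsBelow d N f m ⊆ positionsBelow d N f m' :=
  monotone_filter_right _ fun _ _ hp => hp.trans_le h

lemma xdeg_eq_card (m : ℕ) :
    xdeg d N f m = #((Icc 1 N ×ˢ Icc 1 d).filter fun p => f p.1 p.2 = m) := by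
  rw [card_filter, sum_product]
  rfl

lemma card_positionsBelow_succ (m : ℕ) :
    #(positionsBelow d N f (m + 1)) = #(positionsBelow d N f m) + xdeg d N f m := by
  simp only [positionsBelow, xdeg_eq_card, card_filter, ← sum_add_distrib]
  refine sum_congr rfl fun p _ => ?_
  split_ifs <;> omega

lemma xdeg_zero (hf : ∀ a, 1 ≤ a → a ≤ N → IsTSpread t d (f a)) : xdeg d N f 0 = 0 := by
  refine sum_eq_zero fun a ha => sum_eq_zero fun l hl => if_neg ?_
  rw [mem_Icc] at ha hl
  have := (hf a ha.1 ha.2).1 l hl.1 hl.2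
  omega

lemma SortedTuple.le_of_toLex_le (hf : ∀ a, 1 ≤ a → a ≤ N → IsTSpread t d (f a))
    (hsf : SortedTuple d N f) {a l a' l' : ℕ} (ha : a ∈ Icc 1 N) (hl : l ∈ Icc 1 d)
    (ha' : a' ∈ Icc 1 N) (hl' : l' ∈ Icc 1 d) (h : toLex (l, a) ≤ toLex (l', a')) :
    f a l ≤ f a' l' := by
  rw [mem_Icc] at ha hl ha' hl'
  rcases Prod.Lex.toLex_le_toLex.1 h with h | ⟨rfl, h⟩
  · rcases le_total a a' with haa' | ha'a
    · exact ((hf a ha.1 ha.2).le_of_le hl.1 h.le hl'.2).trans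
        ((hsf a a' ha.1 haa' ha'.2).1 l' hl'.1 hl'.2)
    · exact ((hsf a' a ha'.1 ha'a ha.2).2 l hl.1 (by omega)).trans
        ((hf a' ha'.1 ha'.2).le_of_le (by omega) h hl'.2)
  · exact (hsf a a' ha.1 h ha'.2).1 l hl.1 hl.2

lemma SortedTuple.positionsBelow_subset_or
    (hf : ∀ a, 1 ≤ a → a ≤ N → IsTSpread t d (f a)) (hsf : SortedTuple d N f)
    (hg : ∀ a, 1 ≤ a → a ≤ N → IsTSpread t d (g a)) (hsg : SortedTuple d N g) (m m' : ℕ) :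
    positionsBelow d N f m ⊆ positionsBelow d N g m' ∨
      positionsBelow d N g m' ⊆ positionsBelow d N f m := by
  by_contra! h
  obtain ⟨⟨⟨a, l⟩, hpf, hpg⟩, ⟨⟨a', l'⟩, hqg, hqf⟩⟩ := And.imp not_subset.1 not_subset.1 h
  simp only [mem_positionsBelow, not_and, not_lt] at hpf hpg hqf hqg
  rcases le_total (toLex (l, a)) (toLex (l', a')) with hle | hle
  · have := hsg.le_of_toLex_le hg hpf.1 hpf.2.1 hqg.1 hqg.2.1 hle
    have := hpg hpf.1 hpf.2.1
    omega
  · have := hsf.le_of_toLex_le hf hqg.1 hqg.2.1 hpf.1 hpf.2.1 hle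
    have := hqf hqg.1 hqg.2.1
    omega

/-- Initial segments are determined by their size. -/
lemma positionsBelow_eq_of_xdeg_eq {q : ℕ}
    (hf : ∀ a, 1 ≤ a → a ≤ N → IsTSpread t d (f a)) (hsf : SortedTuple d N f)
    (hg : ∀ a, 1 ≤ a → a ≤ N → IsTSpread t d (g a)) (hsg : SortedTuple d N g)
    (heq : ∀ m, 1 ≤ m → m < q → xdeg d N f m = xdeg d N g m) :
    ∀ m ≤ q, positionsBelow d N f m = positionsBelow d N g m := by
  suffices hcard : ∀ m ≤ q, #(positionsBelow d N f m) = #(positionsBelow d N g m) from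
    fun m hm => (hsf.positionsBelow_subset_or hf hg hsg m m).elim
      (fun h => eq_of_subset_of_card_le h (hcard m hm).ge)
      (fun h => (eq_of_subset_of_card_le h (hcard m hm).le).symm)
  intro m hm
  induction m with
  | zero => simp [positionsBelow]
  | succ n ih =>
    rw [card_positionsBelow_succ, card_positionsBelow_succ, ih (by omega)]
    rcases Nat.eq_zero_or_pos n with rfl | hn
    · rw [xdeg_zero hf, xdeg_zero hg]
    · rw [heq n hn (by omega)]

lemma exists_lt_entry_eq_of_xdeg_lt {q : ℕ}
    (hf : ∀ a, 1 ≤ a → a ≤ N → IsTSpread t d (f a)) (hsf : SortedTuple d N f)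
    (hg : ∀ a, 1 ≤ a → a ≤ N → IsTSpread t d (g a)) (hsg : SortedTuple d N g)
    (heq : ∀ m, 1 ≤ m → m < q → xdeg d N f m = xdeg d N g m)
    (hlt : xdeg d N f q < xdeg d N g q) :
    ∃ a ∈ Icc 1 N, ∃ l ∈ Icc 1 d, q < f a l ∧ g a l = q := by
  have hbelow := positionsBelow_eq_of_xdeg_eq hf hsf hg hsg heq q le_rfl
  obtain ⟨⟨a, l⟩, hpg, hpf⟩ :
      ∃ p ∈ positionsBelow d N g (q + 1), p ∉ positionsBelow d N f (q + 1) := by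
    apply exists_mem_notMem_of_card_lt_card
    rw [card_positionsBelow_succ, card_positionsBelow_succ, hbelow]
    omega
  have hgq : (a, l) ∉ positionsBelow d N g q := by
    rw [← hbelow]
    exact fun h => hpf (positionsBelow_mono q.le_succ h)
  simp only [mem_positionsBelow, not_and, not_lt] at hpg hpf hgq
  have := hgq hpg.1 hpg.2.1
  exact ⟨a, hpg.1, l, hpg.2.1, hpf hpg.1 hpg.2.1, by omega⟩

end SortedTuple

theorem ell_exchange_property_general
    (t d N q : ℕ) (ht : 1 ≤ t)
    (i : ℕ → ℕ)
    (u v : ℕ → ℕ → ℕ)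
    (hu : ∀ a, 1 ≤ a → a ≤ N → IsGen t d i (u a))
    (hv : ∀ a, 1 ≤ a → a ≤ N → IsGen t d i (v a))
    (hsu : SortedTuple d N u) (hsv : SortedTuple d N v)
    (heq : ∀ m, 1 ≤ m → m < q → xdeg d N u m = xdeg d N v m)
    (hlt : xdeg d N u q < xdeg d N v q) :
    ∃ δ l, 1 ≤ δ ∧ δ ≤ N ∧ 1 ≤ l ∧ l ≤ d ∧ q < u δ l ∧
      ∃ w, IsGen t d i w ∧ (u δ l) ::ₘ mseq d w = q ::ₘ mseq d (u δ) := by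
  have hu' a ha ha' : IsTSpread t d (u a) := (hu a ha ha').1
  have hv' a ha ha' : IsTSpread t d (v a) := (hv a ha ha').1
  obtain ⟨a, ha, l, hl, hql, hvl⟩ := exists_lt_entry_eq_of_xdeg_lt hu' hsu hv' hsv heq hlt
  have ha' := mem_Icc.1 ha
  have hl' := mem_Icc.1 hl
  have hq : 1 ≤ q := hvl ▸ (hv' a ha'.1 ha'.2).1 l hl'.1 hl'.2
  have hprev (hl2 : 2 ≤ l) : u a (l - 1) + t ≤ q := by
    have hspread := (hv' a ha'.1 ha'.2).2 l hl2 hl'.2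
    have hpos := (hv' a ha'.1 ha'.2).1 (l - 1) (by omega) (by omega)
    have hmem : (a, l - 1) ∈ positionsBelow d N v (q + 1 - t) := by
      simp only [mem_positionsBelow, mem_Icc]
      omega
    rw [← positionsBelow_eq_of_xdeg_eq hu' hsu hv' hsv heq _ (by omega)] at hmem
    simp only [mem_positionsBelow] at hmem
    omega
  exact ⟨a, l, ha'.1, ha'.2, hl'.1, hl'.2, hql, _,
    (hu a ha'.1 ha'.2).update hq hql.le hprev, cons_mseq_update hl _ _⟩

theorem ell_exchange_property
    (t d N q : ℕ) (ht : 1 ≤ t) (hN : 1 ≤ N) (hq : 1 ≤ q)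
    (i : ℕ → ℕ) (hi : IsTSpread t d i)
    (u v : ℕ → ℕ → ℕ)
    (hu : ∀ a, 1 ≤ a → a ≤ N → IsGen t d i (u a))
    (hv : ∀ a, 1 ≤ a → a ≤ N → IsGen t d i (v a))
    (hsu : SortedTuple d N u) (hsv : SortedTuple d N v)
    (heq : ∀ m, 1 ≤ m → m < q → xdeg d N u m = xdeg d N v m)
    (hlt : xdeg d N u q < xdeg d N v q) :
    ∃ δ l, 1 ≤ δ ∧ δ ≤ N ∧ 1 ≤ l ∧ l ≤ d ∧ q < u δ l ∧
      ∃ w, IsGen t d i w ∧ (u δ l) ::ₘ mseq d w = q ::ₘ mseq d (u δ) :=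
  ell_exchange_property_general t d N q ht i u v hu hv hsu hsv heq hlt
end

section
/- Let u_δ = x_{j_1}···x_{j_d} and v_δ = x_{ℓ_1}···x_{ℓ_d} be minimal generators of B_t(u) with j_1 = ℓ_1, ..., j_{μ-1} = ℓ_{μ-1}, and j_μ > ℓ_μ = q for some μ < d. If j_μ ∉ supp(v_δ), then x_q u_δ / x_{j_μ} is a t-spread monomial and lies in B_t(u); if j_μ ∈ supp(v_δ), then for any j ∈ supp(u_δ) \ supp(v_δ) with j > q, the monomial x_q u_δ / x_j lies in B_t(u). -/
open Function

theorem cons_map_update_val {α β : Type*} [DecidableEq α] {s : Finset α} {k : α} (hk : k ∈ s)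
    (f : α → β) (v : β) :
    f k ::ₘ s.val.map (update f k v) = v ::ₘ s.val.map f := by
  have hs : s.val = k ::ₘ (s.erase k).val := (Multiset.cons_erase hk).symm
  have hrest : (s.erase k).val.map (update f k v) = (s.erase k).val.map f :=
    Multiset.map_congr rfl fun x hx => update_of_ne (Finset.ne_of_mem_erase hx) v f
  rw [hs, Multiset.map_cons, Multiset.map_cons, hrest, update_self, Multiset.cons_swap]

namespace IsTSpread

variable {t d : ℕ} {a : ℕ → ℕ}

theorem le_of_le_s13 (h : IsTSpread t d a) {l l' : ℕ} (hl : 1 ≤ l) (hll' : l ≤ l') (hl' : l' ≤ d) :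
    a l ≤ a l' := by
  induction l', hll' using Nat.le_induction with
  | base => exact le_rfl
  | succ n hn ih =>
    have hstep := h.2 (n + 1) (by omega) hl'
    rw [Nat.add_sub_cancel] at hstep
    exact (ih (by omega)).trans (by omega)

theorem add_le_of_lt_s13 (h : IsTSpread t d a) {l l' : ℕ} (hl : 1 ≤ l) (hll' : l < l') (hl' : l' ≤ d) :
    a l + t ≤ a l' :=
  (Nat.add_le_add_right (h.le_of_le_s13 hl (Nat.le_sub_one_of_lt hll') (by omega)) t).trans
    (h.2 l' (by omega) hl')

end IsTSpread

/-- The index sequence of `x_q · x_{a 1} ⋯ x_{a d} / x_{a ν}` for `μ ≤ ν` and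
`a (μ-1) ≤ q ≤ a μ`: `q` is inserted at position `μ` and `a ν` is dropped. -/
def exchangeSeq (a : ℕ → ℕ) (μ ν q : ℕ) : ℕ → ℕ := fun l =>
  if l = μ then q else if μ < l ∧ l ≤ ν then a (l - 1) else a l

section exchangeSeq

variable {t d : ℕ} {i a : ℕ → ℕ} {μ ν q : ℕ}

theorem exchangeSeq_self : exchangeSeq a μ μ q = update a μ q := by
  funext l
  simp only [exchangeSeq, update_apply]
  split_ifs <;> omega

theorem exchangeSeq_succ (h : μ ≤ ν) :
    exchangeSeq a μ (ν + 1) q = update (exchangeSeq a μ ν q) (ν + 1) (a ν) := by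
  funext l
  simp only [exchangeSeq, update_apply]
  split_ifs <;> first | omega | (congr 1; omega)

theorem cons_mseq_exchangeSeq (hμ : 1 ≤ μ) (hμν : μ ≤ ν) (hν : ν ≤ d) :
    a ν ::ₘ mseq d (exchangeSeq a μ ν q) = q ::ₘ mseq d a := by
  induction ν, hμν using Nat.le_induction with
  | base =>
    rw [exchangeSeq_self]
    exact cons_map_update_val (Finset.mem_Icc.2 ⟨hμ, hν⟩) a q
  | succ n hn ih =>
    have hnew : exchangeSeq a μ n q (n + 1) = a (n + 1) := by
      simp only [exchangeSeq]; split_ifs <;> omega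
    rw [exchangeSeq_succ hn, ← ih (by omega), ← hnew]
    exact cons_map_update_val (Finset.mem_Icc.2 ⟨by omega, hν⟩) _ _

theorem exchangeSeq_le (ha : IsTSpread t d a) (hμ : 1 ≤ μ) (hq : q ≤ a μ) {l : ℕ} (hl : 1 ≤ l)
    (hld : l ≤ d) : exchangeSeq a μ ν q l ≤ a l := by
  simp only [exchangeSeq]
  split_ifs with h
  · exact h ▸ hq
  · exact ha.le_of_le_s13 (by omega) (by omega) hld
  · exact le_rfl

theorem IsTSpread.exchangeSeq (ha : IsTSpread t d a) (hμ : 1 ≤ μ) (hq : 1 ≤ q)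
    (hleft : 2 ≤ μ → a (μ - 1) + t ≤ q) (hle : q ≤ a μ) (hright : μ < ν → q + t ≤ a μ) :
    IsTSpread t d (exchangeSeq a μ ν q) := by
  refine ⟨fun l hl hld => ?_, fun l hl hld => ?_⟩
  · simp only [_root_.exchangeSeq]
    split_ifs
    · exact hq
    · exact ha.1 (l - 1) (by omega) (by omega)
    · exact ha.1 l hl hld
  · have hgap : ∀ n, 2 ≤ n → n ≤ d → a (n - 1) + t ≤ a n := ha.2
    simp only [_root_.exchangeSeq]
    -- one case for each position of `l - 1` and of `l` relative to `μ` and the block `(μ, ν]`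
    split_ifs with hprev _ _ _ _ _ hcur
    · omega
    · rw [hprev]; exact hright (by omega)
    · rw [← hprev] at hle; exact le_trans (by omega) (hgap l hl hld)
    · omega
    · exact hgap (l - 1) (by omega) (by omega)
    · exact (hgap (l - 1) (by omega) (by omega)).trans (ha.le_of_le_s13 (by omega) (by omega) hld)
    · subst hcur; exact hleft hl
    · omega
    · exact hgap l hl hld

theorem IsGen.exchangeSeq (ha : IsGen t d i a) (hμ : 1 ≤ μ) (hq : 1 ≤ q)
    (hleft : 2 ≤ μ → a (μ - 1) + t ≤ q) (hle : q ≤ a μ) (hright : μ < ν → q + t ≤ a μ) :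
    IsGen t d i (exchangeSeq a μ ν q) :=
  ⟨ha.1.exchangeSeq hμ hq hleft hle hright, fun l hl hld =>
    (exchangeSeq_le ha.1 hμ hle hl hld).trans (ha.2 l hl hld)⟩

end exchangeSeq

theorem exchange_step_general
    (t d q μ : ℕ)
    (i a b : ℕ → ℕ)
    (ha : IsGen t d i a) (hb : IsGen t d i b)
    (hμ1 : 1 ≤ μ) (hμ2 : μ < d)
    (hpre : ∀ l, 1 ≤ l → l < μ → a l = b l)
    (hq : b μ = q) (hgt : q < a μ) :
    -- case `j_μ ∉ supp(v_δ)`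
    ((∀ l, 1 ≤ l → l ≤ d → b l ≠ a μ) →
      IsTSpread t d (fun l => if l = μ then q else a l) ∧
      IsGen t d i (fun l => if l = μ then q else a l)) ∧
    -- case `j_μ ∈ supp(v_δ)`
    ((∃ l, 1 ≤ l ∧ l ≤ d ∧ b l = a μ) →
      ∀ j, (∃ l, 1 ≤ l ∧ l ≤ d ∧ a l = j) → (∀ l, 1 ≤ l → l ≤ d → b l ≠ j) →
        q < j →
        ∃ w, IsGen t d i w ∧ j ::ₘ mseq d w = q ::ₘ mseq d a) := by
  have hq1 : 1 ≤ q := hq ▸ hb.1.1 μ hμ1 hμ2.le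
  have hleft : 2 ≤ μ → a (μ - 1) + t ≤ q := fun h2 => by
    rw [hpre (μ - 1) (by omega) (by omega), ← hq]
    exact hb.1.2 μ h2 hμ2.le
  refine ⟨fun _ => ?_, ?_⟩
  · have hgen := ha.exchangeSeq (ν := μ) hμ1 hq1 hleft hgt.le (absurd · (lt_irrefl μ))
    rw [exchangeSeq_self, funext (update_apply a μ q)] at hgen
    exact ⟨hgen.1, hgen⟩
  · rintro ⟨ν, hν1, hνd, hbν⟩ _ ⟨l₀, hl₀1, hl₀d, rfl⟩ hnot -
    have hμν : μ < ν := by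
      by_contra! h
      have := hb.1.le_of_le_s13 hν1 h hμ2.le
      omega
    have hright : q + t ≤ a μ := hq ▸ hbν ▸ hb.1.add_le_of_lt_s13 hμ1 hμν hνd
    have hμl₀ : μ < l₀ := by
      rcases lt_trichotomy l₀ μ with h | rfl | h
      · exact absurd (hpre l₀ hl₀1 h).symm (hnot l₀ hl₀1 hl₀d)
      · exact absurd hbν (hnot ν hν1 hνd)
      · exact h
    exact ⟨exchangeSeq a μ l₀ q,
      ha.exchangeSeq hμ1 hq1 hleft hgt.le fun _ => hright,
      cons_mseq_exchangeSeq hμ1 hμl₀.le hl₀d⟩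

theorem exchange_step
    (t d q μ : ℕ) (ht : 1 ≤ t)
    (i a b : ℕ → ℕ) (hi : IsTSpread t d i)
    (ha : IsGen t d i a) (hb : IsGen t d i b)
    (hμ1 : 1 ≤ μ) (hμ2 : μ < d)
    (hpre : ∀ l, 1 ≤ l → l < μ → a l = b l)
    (hq : b μ = q) (hgt : q < a μ) :
    -- case `j_μ ∉ supp(v_δ)`
    ((∀ l, 1 ≤ l → l ≤ d → b l ≠ a μ) →
      IsTSpread t d (fun l => if l = μ then q else a l) ∧
      IsGen t d i (fun l => if l = μ then q else a l)) ∧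
    -- case `j_μ ∈ supp(v_δ)`
    ((∃ l, 1 ≤ l ∧ l ≤ d ∧ b l = a μ) →
      ∀ j, (∃ l, 1 ≤ l ∧ l ≤ d ∧ a l = j) → (∀ l, 1 ≤ l → l ≤ d → b l ≠ j) →
        q < j →
        ∃ w, IsGen t d i w ∧ j ::ₘ mseq d w = q ::ₘ mseq d a) :=
  exchange_step_general t d q μ i a b ha hb hμ1 hμ2 hpre hq hgt
end

section
/- With the notation of the depth theorem (t ≥ 1, u = x_{i_1}···x_{i_d}, i_1 ≥ t+1, i_d = n), the monomials v_1 = x_1 x_{t+1} ··· x_{(d-2)t+1} x_n, v_2 = x_1 x_{t+1} ··· x_{(d-3)t+1} x_{i_{d-1}} x_n, ..., v_{d-1} = x_1 x_{i_2} ··· x_{i_{d-1}} x_n, v_d = u all belong to G(B_t(u)); moreover for w = v_1···v_d u^{k-d} ∈ G(I^k) with k ≥ d and for each j ∈ [n-1], there is a monomial w' ∈ G(I^k) with w' >_lex w and x_j w = x_{i_s} w' where i_{s-1} ≤ j < i_s (setting i_0 = 1). -/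
/-- Exponent vector of the degree-`d` monomial with index sequence `a`. -/
noncomputable def genExp (d : ℕ) (a : ℕ → ℕ) : ℕ →₀ ℕ :=
  ∑ l ∈ Finset.Icc 1 d, Finsupp.single (a l) 1

/-- `A >_lex B` for exponent vectors (lexicographic, `x_1 > x_2 > ⋯`). -/
def LexGTexp (A B : ℕ →₀ ℕ) : Prop :=
  ∃ m, B m < A m ∧ ∀ p, p < m → A p = B p

/-!
Each `v_m` is the index sequence `1, t+1, …, (p-1)t+1, c, i_{p+2}, …, i_d` with `p = d - m`
and `c = i_{p+1}`. Such a sequence is `t`-spread and bounded by `u` as soon as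
`pt + 1 ≤ c ≤ i_{p+1}`, because `i_1 ≥ t + 1` forces `i_l ≥ lt + 1`. For `i_{s-1} ≤ j < i_s`
the entry `c = i_s` of `v_{d-s+1}` (where `p = s - 1`) can therefore be lowered to `j`; this
multiplies `w` by `x_j / x_{i_s}`, and since `j < i_s` the result is lex-larger.
-/

open Finset Finsupp

def prefixSeq (t p c : ℕ) (a : ℕ → ℕ) (l : ℕ) : ℕ :=
  if l ≤ p then (l - 1) * t + 1 else if l = p + 1 then c else a l

lemma prefixSeq_self (t p c : ℕ) (a : ℕ → ℕ) : prefixSeq t p c a (p + 1) = c := by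
  simp [prefixSeq]

lemma prefixSeq_of_ne {t p c c' l : ℕ} {a : ℕ → ℕ} (hl : l ≠ p + 1) :
    prefixSeq t p c a l = prefixSeq t p c' a l := by
  simp [prefixSeq, hl]

section Generators

variable {t d : ℕ} {i : ℕ → ℕ}

lemma IsTSpread.add_mul_le {a : ℕ → ℕ} (ha : IsTSpread t d a) :
    ∀ l, l + 1 ≤ d → a 1 + l * t ≤ a (l + 1)
  | 0, _ => by rw [zero_mul, add_zero]
  | l + 1, hl => by
    have hstep := ha.2 (l + 2) (by omega) hl
    have ih := ha.add_mul_le l (by omega)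
    rw [show l + 2 - 1 = l + 1 from rfl] at hstep
    show a 1 + (l + 1) * t ≤ a (l + 2)
    rw [Nat.succ_mul]
    omega

lemma IsTSpread.mul_add_one_le (hi : IsTSpread t d i) (h1 : t + 1 ≤ i 1) :
    ∀ l, 1 ≤ l → l ≤ d → l * t + 1 ≤ i l := by
  rintro (_ | l) hl hld
  · omega
  · have := hi.add_mul_le l hld
    rw [Nat.succ_mul]
    omega

lemma IsGen.congr {a b : ℕ → ℕ} (ha : IsGen t d i a)
    (hab : ∀ l, 1 ≤ l → l ≤ d → a l = b l) : IsGen t d i b := by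
  obtain ⟨⟨hpos, hspread⟩, hle⟩ := ha
  refine ⟨⟨fun l h1 h2 => ?_, fun l h1 h2 => ?_⟩, fun l h1 h2 => ?_⟩
  · rw [← hab l h1 h2]; exact hpos l h1 h2
  · rw [← hab l (by omega) h2, ← hab (l - 1) (by omega) (by omega)]; exact hspread l h1 h2
  · rw [← hab l h1 h2]; exact hle l h1 h2

lemma isGen_self (hi : IsTSpread t d i) : IsGen t d i i :=
  ⟨hi, fun _ _ _ => le_rfl⟩

lemma isGen_prefixSeq {p c : ℕ} (hi : IsTSpread t d i) (h1 : t + 1 ≤ i 1)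
    (hc : p * t + 1 ≤ c) (hci : c ≤ i (p + 1)) : IsGen t d i (prefixSeq t p c i) := by
  have hmono : ∀ l, (l - 1) * t ≤ l * t := fun l => Nat.mul_le_mul_right _ (Nat.sub_le l 1)
  refine ⟨⟨fun l hl hld => ?_, fun l hl hld => ?_⟩, fun l hl hld => ?_⟩
  · unfold prefixSeq
    split_ifs
    · omega
    · omega
    · exact hi.1 l hl hld
  · obtain ⟨q, rfl⟩ : ∃ q, l = q + 2 := ⟨l - 2, by omega⟩
    have hspread := hi.2 (q + 2) hl hld
    rw [show q + 2 - 1 = q + 1 from rfl] at hspread ⊢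
    simp only [prefixSeq]
    rw [show q + 2 - 1 = q + 1 from rfl, Nat.add_sub_cancel, Nat.succ_mul]
    have hjunction : q + 1 = p → q * t + t + 1 ≤ c := by rintro rfl; rwa [Nat.succ_mul] at hc
    have hnext : q = p → c ≤ i (q + 1) := by rintro rfl; exact hci
    split_ifs <;> omega
  · have := hi.mul_add_one_le h1 l hl hld
    have := hmono l
    unfold prefixSeq
    split_ifs with ha hb
    · omega
    · subst hb; exact hci
    · exact le_rfl

end Generators

lemma single_add_genExp_eq {d q : ℕ} {a b : ℕ → ℕ} (hq : q ∈ Icc 1 d)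
    (hab : ∀ l ∈ Icc 1 d, l ≠ q → a l = b l) :
    single (b q) 1 + genExp d a = single (a q) 1 + genExp d b := by
  have hrest : ∑ l ∈ Icc 1 d \ {q}, single (a l) 1 = ∑ l ∈ Icc 1 d \ {q}, single (b l) 1 :=
    sum_congr rfl fun l hl => by
      rw [mem_sdiff, mem_singleton] at hl
      rw [hab l hl.1 hl.2]
  rw [genExp, genExp, sum_eq_add_sum_sdiff_singleton_of_mem hq,
    sum_eq_add_sum_sdiff_singleton_of_mem hq, hrest, add_left_comm]

lemma lexGTexp_of_single_add_eq {A B : ℕ →₀ ℕ} {j q : ℕ} (hjq : j < q)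
    (h : single j 1 + A = single q 1 + B) : LexGTexp B A := by
  have happ : ∀ p, single j 1 p + A p = single q 1 p + B p := fun p => by
    rw [← Finsupp.add_apply, ← Finsupp.add_apply, h]
  refine ⟨j, ?_, fun p hp => ?_⟩
  · have := happ j
    rw [Finsupp.single_eq_same, Finsupp.single_eq_of_ne (by omega)] at this
    omega
  · have := happ p
    rw [Finsupp.single_eq_of_ne (by omega), Finsupp.single_eq_of_ne (by omega)] at this
    omega

lemma exists_le_lt_of_le_of_lt (a : ℕ → ℕ) {j : ℕ} (h0 : a 0 ≤ j) :
    ∀ {d}, j < a d → ∃ s, 1 ≤ s ∧ s ≤ d ∧ a (s - 1) ≤ j ∧ j < a s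
  | 0, hd => absurd h0 (by omega)
  | d + 1, hd => by
    by_cases hjd : j < a d
    · obtain ⟨s, hs⟩ := exists_le_lt_of_le_of_lt a h0 hjd
      exact ⟨s, by omega⟩
    · exact ⟨d + 1, by omega, le_rfl, by simpa using hjd, hd⟩

lemma sum_Icc_ite_le {M : Type*} [AddCommMonoid M] (F : ℕ → M) (c : M) {d k : ℕ} (hk : d ≤ k) :
    ∑ a ∈ Icc 1 k, (if a ≤ d then F a else c) = ∑ a ∈ Icc 1 d, F a + (k - d) • c := by
  have hIcc : ∀ m, Icc 1 m = Ioc 0 m := Icc_add_one_left_eq_Ioc 0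
  rw [hIcc, hIcc, ← sum_Ioc_consecutive _ (Nat.zero_le d) hk]
  congr 1
  · exact sum_congr rfl fun a ha => if_pos (mem_Ioc.1 ha).2
  · rw [sum_congr rfl fun a ha => if_neg (not_le.2 (mem_Ioc.1 ha).1), sum_const, Nat.card_Ioc]

lemma add_sum_update_ite_eq {M : Type*} [AddCommMonoid M] {F : ℕ → M} {c x y z : M}
    {d k m : ℕ} (hk : d ≤ k) (hm : m ∈ Icc 1 d) (hxy : x + F m = y + z) :
    x + (∑ a ∈ Icc 1 d, F a + (k - d) • c) =
      y + ∑ a ∈ Icc 1 k, Function.update (fun a => if a ≤ d then F a else c) m z a := by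
  have hmk : m ∈ Icc 1 k := mem_Icc.2 ⟨(mem_Icc.1 hm).1, (mem_Icc.1 hm).2.trans hk⟩
  rw [sum_update_of_mem hmk, ← sum_Icc_ite_le _ _ hk, sum_eq_add_sum_sdiff_singleton_of_mem hmk,
    if_pos (mem_Icc.1 hm).2, ← add_assoc, hxy, add_assoc]

lemma eq_prefixSeq_of_le {t d n m l : ℕ} {i v : ℕ → ℕ} (hn : i d = n)
    (hv : ∀ l, v l = if l ≤ d - m then (l - 1) * t + 1 else if l < d then i l else n)
    (hl : l ≤ d) : v l = prefixSeq t (d - m) (i (d - m + 1)) i l := by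
  rw [hv, prefixSeq]
  split_ifs <;> first | rfl | omega | (subst_vars; rfl) | (rw [← hn]; congr 1; omega)

theorem depth_witness_monomials_general
    (t d n k : ℕ) (hk : d ≤ k)
    (i : ℕ → ℕ) (hi : IsTSpread t d i) (h0 : i 0 = 1) (h1 : t + 1 ≤ i 1)
    (hn : i d = n)
    (v : ℕ → ℕ → ℕ)
    (hv : ∀ m l, v m l =
      if l ≤ d - m then (l - 1) * t + 1 else if l < d then i l else n) :
    (∀ m, 1 ≤ m → m ≤ d → IsGen t d i (v m)) ∧
    (∀ w : ℕ →₀ ℕ,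
      w = (∑ m ∈ Finset.Icc 1 d, genExp d (v m)) + (k - d) • genExp d i →
      ∀ j, 1 ≤ j → j ≤ n - 1 →
        ∃ s, 1 ≤ s ∧ s ≤ d ∧ i (s - 1) ≤ j ∧ j < i s ∧
          ∃ f : ℕ → ℕ → ℕ,
            (∀ a, 1 ≤ a → a ≤ k → IsGen t d i (f a)) ∧
            LexGTexp (∑ a ∈ Finset.Icc 1 k, genExp d (f a)) w ∧
            Finsupp.single j 1 + w =
              Finsupp.single (i s) 1 + ∑ a ∈ Finset.Icc 1 k, genExp d (f a)) := by
  have hlow := hi.mul_add_one_le h1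
  have hgen : ∀ m, 1 ≤ m → m ≤ d → IsGen t d i (v m) := by
    intro m hm hmd
    have hc : (d - m) * t + 1 ≤ i (d - m + 1) :=
      le_trans (by gcongr; omega) (hlow (d - m + 1) (by omega) (by omega))
    exact (isGen_prefixSeq hi h1 hc le_rfl).congr fun l _ hl =>
      (eq_prefixSeq_of_le hn (hv m) hl).symm
  refine ⟨hgen, ?_⟩
  rintro w rfl j hj hjn
  obtain ⟨s, hs1, hsd, hjs, hjs'⟩ := exists_le_lt_of_le_of_lt i (h0 ▸ hj) (show j < i d by omega)
  refine ⟨s, hs1, hsd, hjs, hjs', ?_⟩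
  obtain ⟨p, rfl⟩ : ∃ p, s = p + 1 := ⟨s - 1, by omega⟩
  rw [Nat.add_sub_cancel] at hjs
  have hvp : ∀ l, l ≤ d → v (d - p) l = prefixSeq t p (i (p + 1)) i l := fun l hl => by
    rw [eq_prefixSeq_of_le hn (hv _) hl, Nat.sub_sub_self (Nat.le_of_succ_le hsd)]
  have hv' : IsGen t d i (prefixSeq t p j i) := by
    refine isGen_prefixSeq hi h1 ?_ hjs'.le
    rcases Nat.eq_zero_or_pos p with rfl | hp
    · omega
    · exact (hlow p hp (by omega)).trans hjs
  have hswap : single j 1 + genExp d (v (d - p)) =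
      single (i (p + 1)) 1 + genExp d (prefixSeq t p j i) := by
    have := single_add_genExp_eq (a := v (d - p)) (b := prefixSeq t p j i) (mem_Icc.2 ⟨hs1, hsd⟩)
      fun l hl hlp => by rw [hvp l (mem_Icc.1 hl).2]; exact prefixSeq_of_ne hlp
    rwa [hvp _ hsd, prefixSeq_self, prefixSeq_self] at this
  let f := Function.update (fun a => if a ≤ d then v a else i) (d - p) (prefixSeq t p j i)
  have hw' : single j 1 + ((∑ m ∈ Icc 1 d, genExp d (v m)) + (k - d) • genExp d i) =
      single (i (p + 1)) 1 + ∑ a ∈ Icc 1 k, genExp d (f a) := by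
    simp only [f, Function.apply_update (fun _ => genExp d), apply_ite (genExp d)]
    exact add_sum_update_ite_eq hk (mem_Icc.2 ⟨by omega, by omega⟩) hswap
  refine ⟨f, fun a ha hak => ?_, lexGTexp_of_single_add_eq hjs' hw', hw'⟩
  by_cases hap : a = d - p
  · subst hap; simpa [f] using hv'
  · simp only [f, Function.update_of_ne hap]
    split_ifs with had
    · exact hgen a ha had
    · exact isGen_self hi

theorem depth_witness_monomials
    (t d n k : ℕ) (ht : 1 ≤ t) (hd : 2 ≤ d) (hk : d ≤ k)
    (i : ℕ → ℕ) (hi : IsTSpread t d i) (h0 : i 0 = 1) (h1 : t + 1 ≤ i 1)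
    (hn : i d = n)
    (v : ℕ → ℕ → ℕ)
    (hv : ∀ m l, v m l =
      if l ≤ d - m then (l - 1) * t + 1 else if l < d then i l else n) :
    (∀ m, 1 ≤ m → m ≤ d → IsGen t d i (v m)) ∧
    (∀ w : ℕ →₀ ℕ,
      w = (∑ m ∈ Finset.Icc 1 d, genExp d (v m)) + (k - d) • genExp d i →
      ∀ j, 1 ≤ j → j ≤ n - 1 →
        ∃ s, 1 ≤ s ∧ s ≤ d ∧ i (s - 1) ≤ j ∧ j < i s ∧
          ∃ f : ℕ → ℕ → ℕ,
            (∀ a, 1 ≤ a → a ≤ k → IsGen t d i (f a)) ∧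
            LexGTexp (∑ a ∈ Finset.Icc 1 k, genExp d (f a)) w ∧
            Finsupp.single j 1 + w =
              Finsupp.single (i s) 1 + ∑ a ∈ Finset.Icc 1 k, genExp d (f a)) :=
  depth_witness_monomials_general t d n k hk i hi h0 h1 hn v hv
end

section
/- Let I be the t-spread Veronese ideal generated by u = x_t x_{2t} ··· x_{dt} in S = K[x_1,...,x_{dt}]. For every k ≥ 1, every j ∈ supp(u) = {t, 2t, ..., dt}, and every pair of monomials μ, μ' ∈ I^k that are products of k minimal generators, there is no integer s > j with x_j μ = x_s μ'. Consequently x_j never generates a colon ideal (μ'' ∈ G(I^k) : μ'' >_lex μ) : μ. -/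
/-- `μ` is a product of `k` minimal generators of `B_t(u)` (for `u` given by
the bounds `i`). -/
def IsPowerProd (t d k : ℕ) (i : ℕ → ℕ) (μ : ℕ →₀ ℕ) : Prop :=
  ∃ f : ℕ → ℕ → ℕ, (∀ a, 1 ≤ a → a ≤ k → IsGen t d i (f a)) ∧
    μ = ∑ a ∈ Finset.Icc 1 k, genExp d (f a)

/-
Every minimal generator of `B_t(x_t x_{2t} ⋯ x_{dt})` has exactly one variable in each block
`x_{(q-1)t+1}, …, x_{qt}`, so a product of `k` of them has degree `k` in each block. Hence
`x_{qt} μ` has degree `k + 1` in the `q`-th block while `x_s μ'` with `s > qt` has degree `k`.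
For the colon-ideal statement, lex order on exponent vectors is compatible with addition and
`x_s ≥_lex x_j` for `s ≤ j`, so `μ' >_lex μ` and `x_j μ = x_s μ'` force `s > j`.
-/

theorem lexGTexp_iff {A B : ℕ →₀ ℕ} : LexGTexp A B ↔ toLex B < toLex A := by
  simp only [LexGTexp, Finsupp.Lex.lt_iff, ofLex_toLex]
  exact exists_congr fun m => by rw [and_comm]; simp only [eq_comm]

theorem lt_of_single_add_eq_single_add {j s : ℕ} {μ μ' : ℕ →₀ ℕ} (hlex : LexGTexp μ' μ)
    (h : Finsupp.single j 1 + μ = Finsupp.single s 1 + μ') : j < s := by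
  by_contra! hsj
  have hsingle : toLex (Finsupp.single j 1) ≤ toLex (Finsupp.single s 1) :=
    Finsupp.Lex.single_le_iff.2 hsj
  have := add_lt_add_of_le_of_lt hsingle (lexGTexp_iff.1 hlex)
  rw [← toLex_add, ← toLex_add, h] at this
  exact this.false

noncomputable def blockDegree (t q : ℕ) : (ℕ →₀ ℕ) →+ ℕ :=
  ∑ m ∈ Finset.Ioc ((q - 1) * t) (q * t), Finsupp.applyAddHom m

theorem blockDegree_single (t q x : ℕ) :
    blockDegree t q (Finsupp.single x 1) =
      if x ∈ Finset.Ioc ((q - 1) * t) (q * t) then 1 else 0 := by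
  simp [blockDegree, Finsupp.single_apply]

theorem IsTSpread.sub_one_mul_lt {t d : ℕ} {a : ℕ → ℕ} (h : IsTSpread t d a) {l : ℕ}
    (hl₁ : 1 ≤ l) (hld : l ≤ d) : (l - 1) * t < a l := by
  induction l, hl₁ using Nat.le_induction with
  | base => rw [Nat.sub_self, zero_mul]; exact h.1 1 le_rfl hld
  | succ l hl ih =>
    have hstep := h.2 (l + 1) (by omega) hld
    have hmul : (l - 1) * t + t = l * t := by
      rw [← Nat.succ_mul, Nat.succ_eq_add_one, Nat.sub_add_cancel hl]
    simp only [Nat.add_sub_cancel] at hstep ⊢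
    have := ih (by omega)
    omega

theorem IsGen.mem_block_iff {t d : ℕ} {i a : ℕ → ℕ} (ha : IsGen t d i a)
    (hi : ∀ l, i l ≤ l * t) {l q : ℕ} (hl₁ : 1 ≤ l) (hld : l ≤ d) :
    a l ∈ Finset.Ioc ((q - 1) * t) (q * t) ↔ l = q := by
  have hub : a l ≤ l * t := (ha.2 l hl₁ hld).trans (hi l)
  have hlb : (l - 1) * t < a l := ha.1.sub_one_mul_lt hl₁ hld
  rw [Finset.mem_Ioc]
  refine ⟨fun ⟨hlo, hhi⟩ => ?_, fun hlq => hlq ▸ ⟨hlb, hub⟩⟩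
  by_contra hne
  rcases Nat.lt_or_gt_of_ne hne with hlt | hgt
  · have : l * t ≤ (q - 1) * t := Nat.mul_le_mul_right t (by omega)
    omega
  · have : q * t ≤ (l - 1) * t := Nat.mul_le_mul_right t (by omega)
    omega

theorem IsGen.blockDegree_genExp {t d : ℕ} {i a : ℕ → ℕ} (ha : IsGen t d i a)
    (hi : ∀ l, i l ≤ l * t) {q : ℕ} (hq₁ : 1 ≤ q) (hqd : q ≤ d) :
    blockDegree t q (genExp d a) = 1 := by
  rw [genExp, map_sum]
  calc ∑ l ∈ Finset.Icc 1 d, blockDegree t q (Finsupp.single (a l) 1)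
      = ∑ l ∈ Finset.Icc 1 d, if l = q then 1 else 0 := by
        refine Finset.sum_congr rfl fun l hl => ?_
        obtain ⟨hl₁, hld⟩ := Finset.mem_Icc.1 hl
        rw [blockDegree_single, if_congr (ha.mem_block_iff hi hl₁ hld) rfl rfl]
    _ = 1 := by simp [hq₁, hqd]

theorem IsPowerProd.blockDegree_eq {t d k : ℕ} {i : ℕ → ℕ} {μ : ℕ →₀ ℕ}
    (hμ : IsPowerProd t d k i μ) (hi : ∀ l, i l ≤ l * t) {q : ℕ} (hq₁ : 1 ≤ q) (hqd : q ≤ d) :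
    blockDegree t q μ = k := by
  obtain ⟨f, hf, rfl⟩ := hμ
  rw [map_sum, Finset.sum_congr rfl fun a ha => (hf a (Finset.mem_Icc.1 ha).1
    (Finset.mem_Icc.1 ha).2).blockDegree_genExp hi hq₁ hqd]
  simp

theorem single_add_ne_single_add {t d k : ℕ} {i : ℕ → ℕ} (ht : 1 ≤ t) (hi : ∀ l, i l ≤ l * t)
    {q : ℕ} (hq₁ : 1 ≤ q) (hqd : q ≤ d) {μ μ' : ℕ →₀ ℕ}
    (hμ : IsPowerProd t d k i μ) (hμ' : IsPowerProd t d k i μ') {s : ℕ} (hs : q * t < s) :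
    Finsupp.single (q * t) 1 + μ ≠ Finsupp.single s 1 + μ' := by
  intro h
  have hj : q * t ∈ Finset.Ioc ((q - 1) * t) (q * t) := by
    have : (q - 1) * t < q * t := Nat.mul_lt_mul_of_pos_right (by omega) ht
    simpa using this
  have hs' : s ∉ Finset.Ioc ((q - 1) * t) (q * t) := by rw [Finset.mem_Ioc]; omega
  have := congrArg (blockDegree t q) h
  simp only [map_add, blockDegree_single, if_pos hj, if_neg hs',
    hμ.blockDegree_eq hi hq₁ hqd, hμ'.blockDegree_eq hi hq₁ hqd] at this
  omega

theorem veronese_no_exchange_general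
    (t d k q : ℕ) (ht : 1 ≤ t)
    (hq1 : 1 ≤ q) (hq2 : q ≤ d)
    (i : ℕ → ℕ) (hi : ∀ l, i l = l * t) :
    (∀ μ μ' : ℕ →₀ ℕ, IsPowerProd t d k i μ → IsPowerProd t d k i μ' →
      ∀ s, q * t < s →
        Finsupp.single (q * t) 1 + μ ≠ Finsupp.single s 1 + μ') ∧
    (∀ μ : ℕ →₀ ℕ, IsPowerProd t d k i μ →
      ¬ ∃ (μ' : ℕ →₀ ℕ) (s : ℕ), IsPowerProd t d k i μ' ∧ LexGTexp μ' μ ∧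
        Finsupp.single (q * t) 1 + μ = Finsupp.single s 1 + μ') := by
  have hi' : ∀ l, i l ≤ l * t := fun l => (hi l).le
  refine ⟨fun μ μ' hμ hμ' s hs => single_add_ne_single_add ht hi' hq1 hq2 hμ hμ' hs, ?_⟩
  rintro μ hμ ⟨μ', s, hμ', hlex, h⟩
  exact single_add_ne_single_add ht hi' hq1 hq2 hμ hμ'
    (lt_of_single_add_eq_single_add hlex h) h

theorem veronese_no_exchange
    (t d k q : ℕ) (ht : 1 ≤ t) (hd : 1 ≤ d) (hk : 1 ≤ k)
    (hq1 : 1 ≤ q) (hq2 : q ≤ d)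
    (i : ℕ → ℕ) (hi : ∀ l, i l = l * t) :
    (∀ μ μ' : ℕ →₀ ℕ, IsPowerProd t d k i μ → IsPowerProd t d k i μ' →
      ∀ s, q * t < s →
        Finsupp.single (q * t) 1 + μ ≠ Finsupp.single s 1 + μ') ∧
    (∀ μ : ℕ →₀ ℕ, IsPowerProd t d k i μ →
      ¬ ∃ (μ' : ℕ →₀ ℕ) (s : ℕ), IsPowerProd t d k i μ' ∧ LexGTexp μ' μ ∧
        Finsupp.single (q * t) 1 + μ = Finsupp.single s 1 + μ') :=
  veronese_no_exchange_general t d k q ht hq1 hq2 i hi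
end
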